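/- arXiv:math/0411009 — 5 statements merged into one kernel-verified Lean document; each statement's English description precedes it below -/
import Mathlib

section
/- Let H be a shifted simple graph on vertex set {1,…,n} and let k be a positive integer with k+1 ≤ n. Then H is properly k-colorable (its chromatic number is at most k) if and only if {k, k+1} is not an edge of H; moreover, in that case the map f(i) = min{i, k} is a proper k-coloring of H. -/
/-- Let `H` be a shifted simple graph on the vertex set `{1, …, n}` (here realized as
`Fin n`, where index `i` stands for the vertex `i + 1`) and let `k ≥ 1` with
`k + 1 ≤ n`.  Then `H` is properly `k`-colorable (its chromatic number is at most `k`)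
iff `{k, k+1}` (i.e. the pair of indices `k - 1`, `k`) is not an edge of `H`; moreover,
in that case `f(i) = min {i, k}` (i.e. on indices, `i ↦ min i (k - 1)`) is a proper
`k`-coloring of `H`. -/
theorem shifted_chromaticNumber_le_iff (n k : ℕ) (hk : 1 ≤ k) (hkn : k + 1 ≤ n)
    (H : SimpleGraph (Fin n))
    (hshifted : ∀ a b a' b' : Fin n, H.Adj a b → a' ≤ a → b' ≤ b → a' ≠ b' → H.Adj a' b') :
    (H.chromaticNumber ≤ k ↔ ¬ H.Adj ⟨k - 1, by omega⟩ ⟨k, by omega⟩) ∧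
    (¬ H.Adj ⟨k - 1, by omega⟩ ⟨k, by omega⟩ →
      ∀ a b : Fin n, H.Adj a b → min a.val (k - 1) ≠ min b.val (k - 1)) := by
  have key : ¬ H.Adj ⟨k - 1, by omega⟩ ⟨k, by omega⟩ →
      ∀ a b : Fin n, H.Adj a b → min a.val (k - 1) ≠ min b.val (k - 1) := by
    intro hna a b hab heq
    have hne : a.val ≠ b.val := fun h => H.ne_of_adj hab (Fin.ext h)
    rcases lt_or_ge a.val (k - 1) with ha | ha
    · rcases lt_or_ge b.val (k - 1) with hb | hb
      · simp only [min_eq_left ha.le, min_eq_left hb.le] at heq; exact hne heq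
      · simp only [min_eq_left ha.le, min_eq_right hb] at heq; omega
    · rcases lt_or_ge b.val (k - 1) with hb | hb
      · simp only [min_eq_right ha, min_eq_left hb.le] at heq; omega
      · have hor : k ≤ a.val ∨ k ≤ b.val := by omega
        rcases hor with h | h
        · exact hna (hshifted b a ⟨k - 1, by omega⟩ ⟨k, by omega⟩ hab.symm
            (by simp [Fin.le_def]; omega) (by simp [Fin.le_def]; omega)
            (fun hc => by simp [Fin.ext_iff] at hc; omega))
        · exact hna (hshifted a b ⟨k - 1, by omega⟩ ⟨k, by omega⟩ hab
            (by simp [Fin.le_def]; omega) (by simp [Fin.le_def]; omega)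
            (fun hc => by simp [Fin.ext_iff] at hc; omega))
  refine ⟨⟨fun hchrom hadj => ?_, fun hna => ?_⟩, key⟩
  · have hcol : H.Colorable k := SimpleGraph.chromaticNumber_le_iff_colorable.mp hchrom
    have hcf := hcol.cliqueFree (Nat.lt_succ_self k)
    apply hcf (Finset.univ.map (Fin.castLEEmb hkn))
    constructor
    · intro x hx y hy hxy
      simp only [Finset.mem_coe, Finset.mem_map, Finset.mem_univ, true_and,
        Fin.castLEEmb_apply] at hx hy
      obtain ⟨i, hi⟩ := hx
      obtain ⟨j, hj⟩ := hy
      have hxk : x.val ≤ k := by subst hi; simpa using Nat.lt_succ_iff.mp i.isLt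
      have hyk : y.val ≤ k := by subst hj; simpa using Nat.lt_succ_iff.mp j.isLt
      have hne : x.val ≠ y.val := fun h => hxy (Fin.ext h)
      rcases lt_or_gt_of_ne hne with h | h
      · exact hshifted _ _ x y hadj (by simp [Fin.le_def]; omega)
          (by simp [Fin.le_def]; omega) hxy
      · exact (hshifted _ _ y x hadj (by simp [Fin.le_def]; omega)
          (by simp [Fin.le_def]; omega) (Ne.symm hxy)).symm
    · simp
  · have hcol : H.Colorable k := ⟨SimpleGraph.Coloring.mk
      (fun i => ⟨min i.val (k - 1), by omega⟩)
      (fun {a b} hab h => key hna a b hab (by simpa [Fin.ext_iff] using h))⟩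
    exact hcol.chromaticNumber_le
end

section
/- Let l ≥ 1 and let G = (V,E) be a finite simple graph with |V| ≥ l that is generically l-stress free. Then |E| ≤ l·|V| − l(l+1)/2. -/
open scoped Classical

/-- `H` is a minor of `G`: there is a family of pairwise disjoint nonempty connected
"branch sets" in `G`, one for each vertex of `H`, such that every edge of `H` is
realized by an edge of `G` between the corresponding branch sets. -/
def HasMinor {V W : Type*} (G : SimpleGraph V) (H : SimpleGraph W) : Prop :=
  ∃ B : W → Set V,
    (∀ i, (B i).Nonempty) ∧
    (∀ i j, i ≠ j → Disjoint (B i) (B j)) ∧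
    (∀ i, (G.induce (B i)).Connected) ∧
    (∀ i j, H.Adj i j → ∃ x ∈ B i, ∃ y ∈ B j, G.Adj x y)

/-- `w : E(G) → ℝ` is a stress of the embedding `f : V → ℝ^d`. -/
noncomputable def IsStress {V : Type*} [Fintype V] (G : SimpleGraph V) (d : ℕ)
    (f : V → EuclideanSpace ℝ (Fin d)) (w : G.edgeSet → ℝ) : Prop :=
  ∀ v : V,
    (∑ u : V, if h : G.Adj v u then w ⟨s(v, u), G.mem_edgeSet.mpr h⟩ • (f v - f u) else 0) = 0

/-- The set of `d`-embeddings of `G` whose only stress is the zero function. -/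
def StressFreeEmbeddings {V : Type*} [Fintype V] (G : SimpleGraph V) (d : ℕ) :
    Set (V → EuclideanSpace ℝ (Fin d)) :=
  {f | ∀ w : G.edgeSet → ℝ, IsStress G d f w → w = 0}

/-- `G` is generically `d`-stress free: the set of `d`-embeddings with no nonzero
stress is open and dense in the space of all `d`-embeddings. -/
def GenericallyStressFree {V : Type*} [Fintype V] (G : SimpleGraph V) (d : ℕ) : Prop :=
  IsOpen (StressFreeEmbeddings G d) ∧ Dense (StressFreeEmbeddings G d)

open scoped RealInnerProductSpace
open Module Submodule

abbrev MotionIx (l : ℕ) : Type :=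
  ({p : Fin l × Fin l // p.1 < p.2}) ⊕ (Fin l)

/-- The skew-symmetric matrix associated to coefficients `c`. -/
noncomputable def skewOf {l : ℕ} (c : MotionIx l → ℝ) : Fin l → Fin l → ℝ := fun i j =>
  if h : i < j then c (Sum.inl ⟨(i, j), h⟩)
  else if h' : j < i then -(c (Sum.inl ⟨(j, i), h'⟩)) else 0

lemma skewOf_antisymm {l : ℕ} (c : MotionIx l → ℝ) (i j : Fin l) :
    skewOf c j i = -skewOf c i j := by
  rcases lt_trichotomy i j with h | h | h
  · simp [skewOf, h, not_lt_of_gt h, h.ne']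
  · subst h; simp [skewOf]
  · simp [skewOf, h, not_lt_of_gt h, h.ne']

/-- The linear endomorphism of `ℝ^l` given by the skew matrix of `c`. -/
noncomputable def skewMap {l : ℕ} (c : MotionIx l → ℝ) :
    EuclideanSpace ℝ (Fin l) →ₗ[ℝ] EuclideanSpace ℝ (Fin l) where
  toFun x := (WithLp.toLp 2 (fun k => ∑ i, skewOf c k i * x i) : EuclideanSpace ℝ (Fin l))
  map_add' x y := by
    ext k
    simp [PiLp.add_apply, mul_add, Finset.sum_add_distrib]
  map_smul' r x := by
    ext k
    simp [PiLp.smul_apply, Finset.mul_sum, smul_eq_mul]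
    ring_nf
    exact Finset.sum_congr rfl fun i _ => by ring

lemma skewMap_skew {l : ℕ} (c : MotionIx l → ℝ) (x y : EuclideanSpace ℝ (Fin l)) :
    ⟪skewMap c x, y⟫ = -⟪x, skewMap c y⟫ := by
  simp only [skewMap, LinearMap.coe_mk, AddHom.coe_mk, PiLp.inner_apply, RCLike.inner_apply,
    conj_trivial]
  rw [show (∑ k, y k * ∑ i, skewOf c k i * x i) = ∑ k, (∑ i, skewOf c k i * x i) * y k from
      Finset.sum_congr rfl fun k _ => mul_comm _ _,
    show (∑ i, (∑ k, skewOf c i k * y k) * x i) = ∑ i, x i * ∑ k, skewOf c i k * y k from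
      Finset.sum_congr rfl fun i _ => mul_comm _ _]
  calc ∑ k, (∑ i, skewOf c k i * x i) * y k
      = ∑ k, ∑ i, skewOf c k i * x i * y k := by
        exact Finset.sum_congr rfl fun k _ => Finset.sum_mul ..
    _ = ∑ i, ∑ k, skewOf c k i * x i * y k := Finset.sum_comm
    _ = ∑ i, -(x i * ∑ k, skewOf c i k * y k) := by
        refine Finset.sum_congr rfl fun i _ => ?_
        rw [Finset.mul_sum, ← Finset.sum_neg_distrib]
        refine Finset.sum_congr rfl fun k _ => ?_
        rw [skewOf_antisymm]
        ring
    _ = -∑ i, x i * ∑ k, skewOf c i k * y k := by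
        rw [← Finset.sum_neg_distrib]

lemma skewOf_add {l : ℕ} (c c' : MotionIx l → ℝ) (i j : Fin l) :
    skewOf (c + c') i j = skewOf c i j + skewOf c' i j := by
  unfold skewOf
  split_ifs <;> simp <;> ring

lemma skewOf_smul {l : ℕ} (r : ℝ) (c : MotionIx l → ℝ) (i j : Fin l) :
    skewOf (r • c) i j = r * skewOf c i j := by
  unfold skewOf
  split_ifs <;> simp <;> ring

lemma skewMap_apply {l : ℕ} (c : MotionIx l → ℝ) (x : EuclideanSpace ℝ (Fin l)) (k : Fin l) :
    skewMap c x k = ∑ i, skewOf c k i * x i := rfl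

/-- The translation part of the motion coefficients. -/
noncomputable def translationOf {l : ℕ} (c : MotionIx l → ℝ) : EuclideanSpace ℝ (Fin l) :=
  WithLp.toLp 2 (fun k => c (Sum.inr k))

lemma translationOf_apply {l : ℕ} (c : MotionIx l → ℝ) (k : Fin l) :
    translationOf c k = c (Sum.inr k) := rfl

/-- The linear map sending motion coefficients to the corresponding trivial
infinitesimal motion of the framework `f`. -/
noncomputable def motionMap {V : Type*} [Fintype V] (l : ℕ)
    (f : V → EuclideanSpace ℝ (Fin l)) :
    (MotionIx l → ℝ) →ₗ[ℝ] (V → EuclideanSpace ℝ (Fin l)) where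
  toFun c := fun v => skewMap c (f v) + translationOf c
  map_add' c c' := by
    funext v
    ext k
    simp only [Pi.add_apply, PiLp.add_apply, skewMap_apply, skewOf_add, add_mul,
      Finset.sum_add_distrib, translationOf_apply]
    ring
  map_smul' r c := by
    funext v
    ext k
    simp only [RingHom.id_apply, Pi.smul_apply, PiLp.smul_apply, smul_eq_mul, skewMap_apply,
      skewOf_smul, mul_assoc, Finset.mul_sum, translationOf_apply, PiLp.add_apply, mul_add]

/-- The ordered pairs `i < j` in `Fin l` biject with `Σ j, Fin j`. -/
def motionPairEquiv (l : ℕ) : {p : Fin l × Fin l // p.1 < p.2} ≃ Σ j : Fin l, Fin j.1 where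
  toFun p := ⟨p.1.2, ⟨p.1.1.1, p.2⟩⟩
  invFun x := ⟨(⟨x.2.1, x.2.2.trans x.1.2⟩, x.1), x.2.2⟩
  left_inv p := rfl
  right_inv x := rfl

lemma card_motionIx (l : ℕ) : Fintype.card (MotionIx l) = l * (l + 1) / 2 := by
  have h1 : Fintype.card ({p : Fin l × Fin l // p.1 < p.2}) = l * (l - 1) / 2 := by
    rw [Fintype.card_congr (motionPairEquiv l), Fintype.card_sigma]
    simp only [Fintype.card_fin]
    rw [Fin.sum_univ_eq_sum_range (fun i => i) l, Finset.sum_range_id]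
  have h2 : l * (l + 1) / 2 = l * (l - 1) / 2 + l := by
    calc l * (l + 1) / 2 = (l + 1) * l / 2 := by rw [Nat.mul_comm]
      _ = (l + 1).choose 2 := by rw [Nat.choose_two_right]; simp
      _ = l.choose 1 + l.choose 2 := Nat.choose_succ_succ _ _
      _ = l + l * (l - 1) / 2 := by rw [Nat.choose_one_right, Nat.choose_two_right]
      _ = l * (l - 1) / 2 + l := Nat.add_comm _ _
  simp [MotionIx, Fintype.card_sum, h1, h2]

/-- A skew-symmetric endomorphism of `ℝ^l` whose kernel has dimension ≥ l - 1 is zero. -/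
lemma skew_eq_zero_of_large_ker {l : ℕ} (A : EuclideanSpace ℝ (Fin l) →ₗ[ℝ] EuclideanSpace ℝ (Fin l))
    (hskew : ∀ x y, ⟪A x, y⟫ = -⟪x, A y⟫)
    (hker : l - 1 ≤ finrank ℝ (LinearMap.ker A)) : A = 0 := by
  by_contra hA
  set K := LinearMap.ker A with hK
  have hKne : K ≠ ⊤ := fun h => hA (LinearMap.ker_eq_top.mp h)
  have hdimtot : finrank ℝ (EuclideanSpace ℝ (Fin l)) = l := finrank_euclideanSpace_fin
  have hKlt : finrank ℝ K < l := by
    have := Submodule.finrank_lt hKne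
    omega
  have hKeq : finrank ℝ K = l - 1 := by omega
  have hortho : finrank ℝ K + finrank ℝ Kᗮ = l := by
    have h := Submodule.finrank_add_finrank_orthogonal K
    rw [hdimtot] at h; exact h
  have hKperp : finrank ℝ Kᗮ = 1 := by omega
  have hrange_le : LinearMap.range A ≤ Kᗮ := by
    rintro x ⟨y, rfl⟩
    intro u hu
    have : A u = 0 := hu
    have h2 := hskew u y
    rw [this] at h2
    simpa using h2.symm
  have hrank : finrank ℝ (LinearMap.range A) = 1 := by
    have h := LinearMap.finrank_range_add_finrank_ker A
    rw [hdimtot, ← hK] at h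
    omega
  have hrange_eq : LinearMap.range A = Kᗮ :=
    Submodule.eq_of_le_of_finrank_eq hrange_le (by rw [hrank, hKperp])
  obtain ⟨n, hnmem, hn0⟩ : ∃ n, n ∈ Kᗮ ∧ n ≠ 0 := by
    apply Submodule.exists_mem_ne_zero_of_ne_bot
    intro hbot
    rw [hbot, finrank_bot] at hKperp
    omega
  have hspan : (ℝ ∙ n) = Kᗮ := by
    apply Submodule.eq_of_le_of_finrank_eq
    · rwa [Submodule.span_singleton_le_iff_mem]
    · rw [finrank_span_singleton hn0, hKperp]
  have hAn : A n ∈ (ℝ ∙ n) := by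
    rw [hspan, ← hrange_eq]; exact ⟨n, rfl⟩
  obtain ⟨r, hr⟩ := Submodule.mem_span_singleton.mp hAn
  have hinner : ⟪A n, n⟫ = 0 := by
    have h1 := hskew n n
    have h2 : ⟪n, A n⟫ = ⟪A n, n⟫ := real_inner_comm _ _
    rw [h2] at h1; linarith
  have hr0 : r = 0 := by
    rw [← hr, real_inner_smul_left] at hinner
    have : ⟪n, n⟫ ≠ 0 := fun h => hn0 (inner_self_eq_zero.mp h)
    rcases mul_eq_zero.mp hinner with h | h
    · exact h
    · exact absurd h this
  have hAn0 : A n = 0 := by rw [← hr, hr0, zero_smul]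
  have hnK : n ∈ K := hAn0
  have : ⟪n, n⟫ = 0 := hnmem n hnK
  exact hn0 (inner_self_eq_zero.mp this)

lemma motionMap_injective {V : Type*} [Fintype V] {l : ℕ} [NeZero l]
    (f : V → EuclideanSpace ℝ (Fin l)) (σ : Fin l ↪ V)
    (hind : LinearIndependent ℝ (fun a : {a : Fin l // a ≠ 0} => f (σ a) - f (σ 0))) :
    Function.Injective (motionMap l f) := by
  rw [← LinearMap.ker_eq_bot, Submodule.eq_bot_iff]
  intro c hc
  rw [LinearMap.mem_ker] at hc
  have hval : ∀ v : V, skewMap c (f v) + translationOf c = 0 := fun v => congrFun hc v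
  have hdiff : ∀ a : {a : Fin l // a ≠ 0}, skewMap c (f (σ a) - f (σ 0)) = 0 := by
    intro a
    have h1 := hval (σ a)
    have h2 := hval (σ 0)
    have : skewMap c (f (σ a)) = skewMap c (f (σ 0)) := by
      have := sub_eq_zero.mpr (h1.trans h2.symm)
      simpa [add_sub_add_right_eq_sub, sub_eq_zero] using this
    rw [map_sub, this, sub_self]
  have hA : skewMap c = 0 := by
    apply skew_eq_zero_of_large_ker (skewMap c) (skewMap_skew c)
    have hsub : Submodule.span ℝ
        (Set.range (fun a : {a : Fin l // a ≠ 0} => f (σ a) - f (σ 0))) ≤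
        LinearMap.ker (skewMap c) := by
      rw [Submodule.span_le]
      rintro _ ⟨a, rfl⟩
      exact hdiff a
    have hcard : Fintype.card {a : Fin l // a ≠ 0} = l - 1 := by
      have : Fintype.card {a : Fin l // ¬ a = 0} = Fintype.card (Fin l) - Fintype.card {a : Fin l // a = 0} :=
        Fintype.card_subtype_compl _
      simpa [Fintype.card_subtype_eq] using this
    calc l - 1 = finrank ℝ (Submodule.span ℝ
          (Set.range (fun a : {a : Fin l // a ≠ 0} => f (σ a) - f (σ 0)))) := by
          rw [finrank_span_eq_card hind, hcard]
      _ ≤ finrank ℝ (LinearMap.ker (skewMap c)) := Submodule.finrank_mono hsub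
  have ht : translationOf c = 0 := by
    have := hval (σ 0)
    rwa [hA, LinearMap.zero_apply, zero_add] at this
  have hS : ∀ i j : Fin l, skewOf c i j = 0 := by
    intro i j
    have h1 : skewMap c (EuclideanSpace.single j 1) = 0 := by rw [hA]; rfl
    have h2 := congrArg (· i) h1
    rw [skewMap_apply] at h2
    simpa [EuclideanSpace.single_apply, mul_ite, Finset.sum_ite_eq'] using h2
  funext d
  rcases d with ⟨⟨i, j⟩, hij⟩ | k
  · have := hS i j
    rw [skewOf, dif_pos hij] at this
    simpa using this
  · have := congrArg (· k) ht
    simpa [translationOf] using this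

/-- The rigidity (stress) map of the framework `(G, f)`. -/
noncomputable def rigidityMap {V : Type*} [Fintype V] (G : SimpleGraph V) (l : ℕ)
    (f : V → EuclideanSpace ℝ (Fin l)) :
    (G.edgeSet → ℝ) →ₗ[ℝ] (V → EuclideanSpace ℝ (Fin l)) where
  toFun w := fun v =>
    ∑ u : V, if h : G.Adj v u then w ⟨s(v, u), G.mem_edgeSet.mpr h⟩ • (f v - f u) else 0
  map_add' w w' := by
    funext v
    rw [Pi.add_apply, ← Finset.sum_add_distrib]
    refine Finset.sum_congr rfl fun u _ => ?_
    split_ifs with hadj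
    · simp [add_smul]
    · simp
  map_smul' r w := by
    funext v
    rw [RingHom.id_apply, Pi.smul_apply, Finset.smul_sum]
    refine Finset.sum_congr rfl fun u _ => ?_
    split_ifs with hadj
    · simp [smul_smul]
    · simp

lemma rigidityMap_apply {V : Type*} [Fintype V] (G : SimpleGraph V) (l : ℕ)
    (f : V → EuclideanSpace ℝ (Fin l)) (w : G.edgeSet → ℝ) (v : V) :
    rigidityMap G l f w v =
      ∑ u : V, if h : G.Adj v u then w ⟨s(v, u), G.mem_edgeSet.mpr h⟩ • (f v - f u) else 0 := rfl

lemma rigidityMap_injective {V : Type*} [Fintype V] (G : SimpleGraph V) (l : ℕ)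
    {f : V → EuclideanSpace ℝ (Fin l)} (hf : f ∈ StressFreeEmbeddings G l) :
    Function.Injective (rigidityMap G l f) := by
  rw [← LinearMap.ker_eq_bot, Submodule.eq_bot_iff]
  intro w hw
  rw [LinearMap.mem_ker] at hw
  exact hf w fun v => congrFun hw v

lemma ranges_inf_eq_bot {V : Type*} [Fintype V] (G : SimpleGraph V) (l : ℕ)
    (f : V → EuclideanSpace ℝ (Fin l)) :
    LinearMap.range (rigidityMap G l f) ⊓ LinearMap.range (motionMap l f) = ⊥ := by
  rw [Submodule.eq_bot_iff]
  rintro m hm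
  rw [Submodule.mem_inf] at hm
  obtain ⟨⟨w, hw⟩, ⟨c, hc⟩⟩ := hm
  have hmv : ∀ v, m v = skewMap c (f v) + translationOf c := fun v => (congrFun hc v).symm
  set g : V → V → ℝ := fun v u =>
    if h : G.Adj v u then w ⟨s(v, u), G.mem_edgeSet.mpr h⟩ * ⟪f v - f u, m v⟫ else 0 with hg
  have key : ∀ v u, g v u + g u v = 0 := by
    intro v u
    by_cases hadj : G.Adj v u
    · have hadj' : G.Adj u v := hadj.symm
      have hedge : (⟨s(u, v), G.mem_edgeSet.mpr hadj'⟩ : G.edgeSet) =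
          ⟨s(v, u), G.mem_edgeSet.mpr hadj⟩ := Subtype.ext (Sym2.eq_swap)
      simp only [hg, dif_pos hadj, dif_pos hadj', hedge]
      have hmsub : m v - m u = skewMap c (f v - f u) := by
        rw [hmv v, hmv u, map_sub]
        abel
      have hz : ⟪f v - f u, skewMap c (f v - f u)⟫ = 0 := by
        have h1 := skewMap_skew c (f v - f u) (f v - f u)
        have h2 : ⟪skewMap c (f v - f u), f v - f u⟫ =
            ⟪f v - f u, skewMap c (f v - f u)⟫ := real_inner_comm _ _
        linarith
      have hneg : ⟪f u - f v, m u⟫ = -⟪f v - f u, m u⟫ := by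
        rw [← neg_sub, inner_neg_left]
      have hsub : ⟪f v - f u, m v⟫ - ⟪f v - f u, m u⟫ = 0 := by
        rw [← inner_sub_right, hmsub, hz]
      have ha : ⟪f v - f u, m v⟫ = ⟪f v - f u, m u⟫ := by linarith
      rw [hneg, ha]
      ring
    · have hadj' : ¬ G.Adj u v := fun h' => hadj h'.symm
      simp [hg, dif_neg hadj, dif_neg hadj']
  have hX1 : ∑ v, ⟪(rigidityMap G l f) w v, m v⟫ = ∑ v, ∑ u, g v u := by
    refine Finset.sum_congr rfl fun v _ => ?_
    rw [rigidityMap_apply, sum_inner]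
    refine Finset.sum_congr rfl fun u _ => ?_
    by_cases hadj : G.Adj v u
    · simp only [hg, dif_pos hadj, real_inner_smul_left]
    · simp [hg, dif_neg hadj]
  have hXz : (∑ v, ∑ u, g v u) = 0 := by
    have hdouble : (∑ v, ∑ u, g v u) + (∑ v, ∑ u, g u v) = 0 := by
      rw [← Finset.sum_add_distrib]
      refine Finset.sum_eq_zero fun v _ => ?_
      rw [← Finset.sum_add_distrib]
      exact Finset.sum_eq_zero fun u _ => key v u
    have hcomm : (∑ v, ∑ u, g u v) = ∑ v, ∑ u, g v u := Finset.sum_comm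
    linarith
  have hm0 : ∑ v, ⟪m v, m v⟫ = 0 := by
    have : ∑ v, ⟪m v, m v⟫ = ∑ v, ⟪(rigidityMap G l f) w v, m v⟫ :=
      Finset.sum_congr rfl fun v _ => by rw [congrFun hw v]
    rw [this, hX1, hXz]
  have hvz : ∀ v : V, m v = 0 := by
    intro v
    have := (Finset.sum_eq_zero_iff_of_nonneg
      (fun v _ => real_inner_self_nonneg (x := m v))).mp hm0 v (Finset.mem_univ v)
    exact inner_self_eq_zero.mp this
  exact (Submodule.mem_bot ℝ).mpr (funext hvz)

/-- If `G = (V, E)` is a finite simple graph with `|V| ≥ l` which is generically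
`l`-stress free (`l ≥ 1`), then `|E| ≤ l·|V| - l(l+1)/2`
(stated additively as `|E| + l(l+1)/2 ≤ l·|V|` to avoid truncated subtraction). -/
theorem card_edges_le_of_genericallyStressFree {V : Type*} [Fintype V] (G : SimpleGraph V)
    (l : ℕ) (hl : 1 ≤ l) (hcard : l ≤ Fintype.card V)
    (h : GenericallyStressFree G l) :
    G.edgeFinset.card + l * (l + 1) / 2 ≤ l * Fintype.card V := by
  have hdense : Dense (StressFreeEmbeddings G l) := h.2
  haveI : NeZero l := ⟨by omega⟩
  obtain ⟨σ⟩ : Nonempty (Fin l ↪ V) :=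
    Function.Embedding.nonempty_of_card_le (by simpa using hcard)
  -- the (open) set of embeddings whose chosen vertex differences are linearly independent
  set Θ : (V → EuclideanSpace ℝ (Fin l)) → ({a : Fin l // a ≠ 0} → EuclideanSpace ℝ (Fin l)) :=
    fun g a => g (σ a) - g (σ 0) with hΘ
  have hΘcont : Continuous Θ :=
    continuous_pi fun a => (continuous_apply (σ (a : Fin l))).sub (continuous_apply (σ 0))
  have hopen : IsOpen {g : V → EuclideanSpace ℝ (Fin l) | LinearIndependent ℝ (Θ g)} :=
    IsOpen.preimage hΘcont isOpen_setOf_linearIndependent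
  have hnonempty : {g : V → EuclideanSpace ℝ (Fin l) | LinearIndependent ℝ (Θ g)}.Nonempty := by
    set x : Fin l → EuclideanSpace ℝ (Fin l) :=
      fun a => if a = 0 then 0 else EuclideanSpace.single a 1 with hx
    set g₀ : V → EuclideanSpace ℝ (Fin l) :=
      fun v => if hv : ∃ a, σ a = v then x (Classical.choose hv) else 0 with hg₀
    have hg₀σ : ∀ a, g₀ (σ a) = x a := by
      intro a
      have hv : ∃ b, σ b = σ a := ⟨a, rfl⟩
      have hca : Classical.choose hv = a := σ.injective (Classical.choose_spec hv)
      simp only [hg₀, dif_pos hv, hca]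
    refine ⟨g₀, ?_⟩
    have hΘg₀ : Θ g₀ = fun a : {a : Fin l // a ≠ 0} => EuclideanSpace.single (a : Fin l) 1 := by
      funext a
      simp [hΘ, hg₀σ, hx, a.2]
    show LinearIndependent ℝ (Θ g₀)
    rw [hΘg₀]
    have hbli := (EuclideanSpace.basisFun (Fin l) ℝ).toBasis.linearIndependent
    have := hbli.comp (Subtype.val : {a : Fin l // a ≠ 0} → Fin l) Subtype.val_injective
    rw [show (fun a : {a : Fin l // a ≠ 0} => EuclideanSpace.single (a : Fin l) (1 : ℝ)) =
        ⇑(EuclideanSpace.basisFun (Fin l) ℝ).toBasis ∘ Subtype.val from ?_]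
    · exact this
    funext a
    simp [EuclideanSpace.basisFun_apply]
  obtain ⟨f, hf, hfind⟩ := hdense.exists_mem_open hopen hnonempty
  -- rank counting
  have hTinj : Function.Injective (rigidityMap G l f) := rigidityMap_injective G l hf
  have hMinj : Function.Injective (motionMap l f) := motionMap_injective f σ hfind
  have hTrank : finrank ℝ (LinearMap.range (rigidityMap G l f)) = Fintype.card G.edgeSet := by
    rw [LinearMap.finrank_range_of_inj hTinj, Module.finrank_fintype_fun_eq_card]
  have hMrank : finrank ℝ (LinearMap.range (motionMap l f)) = l * (l + 1) / 2 := by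
    rw [LinearMap.finrank_range_of_inj hMinj, Module.finrank_fintype_fun_eq_card, card_motionIx]
  have htot : finrank ℝ (V → EuclideanSpace ℝ (Fin l)) = Fintype.card V * l := by
    rw [Module.finrank_pi_fintype]
    simp [finrank_euclideanSpace_fin, Finset.sum_const, smul_eq_mul]
  have hsum := Submodule.finrank_sup_add_finrank_inf_eq
    (LinearMap.range (rigidityMap G l f)) (LinearMap.range (motionMap l f))
  rw [ranges_inf_eq_bot G l f, finrank_bot, add_zero, hTrank, hMrank] at hsum
  have hle := Submodule.finrank_le
    (LinearMap.range (rigidityMap G l f) ⊔ LinearMap.range (motionMap l f))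
  rw [htot, hsum] at hle
  have hcardE : G.edgeFinset.card = Fintype.card G.edgeSet := SimpleGraph.edgeFinset_card
  rw [hcardE]
  linarith [hle, Nat.mul_comm (Fintype.card V) l]
end

section
/- The complete 5-partite graph K_{2,2,2,2,2} (five parts, each of size 2; two vertices are adjacent iff they lie in different parts) has no K_8 minor, yet it is not generically 6-stress free. Consequently, the statement 'every K_r-minor free graph is generically (r−2)-stress free' fails for r = 8. -/
open scoped Classical

/-- The complete 5-partite graph `K_{2,2,2,2,2}`: five parts of size two, two
vertices adjacent iff they lie in different parts. -/
def K22222 : SimpleGraph (Fin 5 × Fin 2) where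
  Adj x y := x.1 ≠ y.1
  symm := ⟨fun _ _ h => Ne.symm h⟩
  loopless := ⟨fun _ h => h rfl⟩

theorem no_K8_minor : ¬ HasMinor K22222 (⊤ : SimpleGraph (Fin 8)) := by
  rintro ⟨B, hne, hdisj, hconn, hadj⟩
  classical
  set Bf : Fin 8 → Finset (Fin 5 × Fin 2) := fun i => (Set.toFinite (B i)).toFinset with hBf
  have hmem : ∀ i x, x ∈ Bf i ↔ x ∈ B i := by
    intro i x; rw [hBf]; exact Set.Finite.mem_toFinset _
  have hBfdisj : ∀ i j, i ≠ j → Disjoint (Bf i) (Bf j) := by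
    intro i j hij
    rw [Finset.disjoint_left]
    intro a ha hb
    exact (hdisj i j hij).le_bot ⟨(hmem i a).mp ha, (hmem j a).mp hb⟩
  have hsum : ∑ i : Fin 8, (Bf i).card ≤ 10 := by
    have h1 : (Finset.univ.biUnion Bf).card = ∑ i : Fin 8, (Bf i).card :=
      Finset.card_biUnion (fun i _ j _ hij => hBfdisj i j hij)
    have h2 : (Finset.univ.biUnion Bf).card ≤ Fintype.card (Fin 5 × Fin 2) :=
      Finset.card_le_univ _
    simp only [Fintype.card_prod, Fintype.card_fin] at h2
    omega
  have hcard1 : ∀ i, 1 ≤ (Bf i).card := by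
    intro i
    obtain ⟨x, hx⟩ := hne i
    exact Finset.card_pos.mpr ⟨x, (hmem i x).mpr hx⟩
  set s : Finset (Fin 8) := Finset.univ.filter (fun i => 2 ≤ (Bf i).card) with hs
  have hscard : s.card ≤ 2 := by
    by_contra h
    push_neg at h
    have hsplit := Finset.sum_filter_add_sum_filter_not Finset.univ
      (fun i => 2 ≤ (Bf i).card) (fun i => (Bf i).card)
    rw [← hs] at hsplit
    have h2 : ∑ i ∈ s, (Bf i).card ≥ 2 * s.card := by
      calc ∑ i ∈ s, (Bf i).card ≥ ∑ _i ∈ s, 2 :=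
        Finset.sum_le_sum (fun i hi => (Finset.mem_filter.mp hi).2)
      _ = 2 * s.card := by rw [Finset.sum_const]; ring
    have h3 : ∑ i ∈ Finset.univ.filter (fun i => ¬ 2 ≤ (Bf i).card), (Bf i).card
        ≥ (Finset.univ.filter (fun i => ¬ 2 ≤ (Bf i).card)).card := by
      calc ∑ i ∈ _, (Bf i).card ≥ ∑ _i ∈ _, 1 := Finset.sum_le_sum (fun i _ => hcard1 i)
      _ = _ := by rw [Finset.sum_const, smul_eq_mul, mul_one]
    have h4 : s.card + (Finset.univ.filter (fun i => ¬ 2 ≤ (Bf i).card)).card = 8 := by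
      rw [Finset.card_filter_add_card_filter_not]; simp
    omega
  -- pick representatives
  have hpick : ∀ i, (hne i).choose ∈ B i := fun i => (hne i).choose_spec
  set p : Fin 8 → Fin 5 × Fin 2 := fun i => (hne i).choose with hp
  have hsingle : ∀ i, i ∉ s → B i = {p i} := by
    intro i hi
    simp only [hs, Finset.mem_filter, Finset.mem_univ, true_and, not_le] at hi
    have h1 : (Bf i).card = 1 := le_antisymm (by omega) (hcard1 i)
    obtain ⟨a, ha⟩ := Finset.card_eq_one.mp h1
    have hpa : p i ∈ Bf i := (hmem i _).mpr (hpick i)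
    rw [ha, Finset.mem_singleton] at hpa
    ext x
    rw [← hmem i x, ha, hpa, Finset.mem_singleton, Set.mem_singleton_iff]
  have htcard : 6 ≤ sᶜ.card := by
    have := Finset.card_compl_add_card s
    simp only [Fintype.card_fin] at this ⊢
    omega
  have hmaps : ∀ i ∈ sᶜ, (p i).1 ∈ (Finset.univ : Finset (Fin 5)) := fun _ _ => Finset.mem_univ _
  obtain ⟨i, hi, j, hj, hij, heq⟩ :=
    Finset.exists_ne_map_eq_of_card_lt_of_maps_to (by simp; omega) hmaps
  obtain ⟨x, hx, y, hy, hxy⟩ := hadj i j (by simpa using hij)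
  rw [hsingle i (Finset.mem_compl.mp hi), Set.mem_singleton_iff] at hx
  rw [hsingle j (Finset.mem_compl.mp hj), Set.mem_singleton_iff] at hy
  subst hx; subst hy
  exact (show (p i).1 ≠ (p j).1 from hxy) heq


open Matrix

noncomputable section StressProof

abbrev Vt := Fin 5 × Fin 2
abbrev E6 := EuclideanSpace ℝ (Fin 6)
abbrev H60 := EuclideanSpace ℝ (Vt × Fin 6)
abbrev κT := {p : Fin 6 × Fin 6 // p.1 < p.2} ⊕ Fin 6

def vtx : Fin 6 → Vt := ![(1,0),(2,0),(3,0),(4,0),(0,1),(1,1)]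

def Mf (f : Vt → E6) : Matrix (Fin 6) (Fin 6) ℝ :=
  fun i k => f (vtx k) i - f ((0 : Fin 5), (0 : Fin 2)) i

/-- The stress-equations map, valued in the plain function space. -/
def Phi0 (f : Vt → E6) : (↥K22222.edgeSet → ℝ) →ₗ[ℝ] (Vt × Fin 6 → ℝ) where
  toFun w := fun q => ∑ u : Vt,
    if h : K22222.Adj q.1 u then
      w ⟨s(q.1, u), K22222.mem_edgeSet.mpr h⟩ * (f q.1 q.2 - f u q.2) else 0
  map_add' w₁ w₂ := by
    funext q
    simp only [Pi.add_apply]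
    rw [← Finset.sum_add_distrib]
    refine Finset.sum_congr rfl fun u _ => ?_
    by_cases h : K22222.Adj q.1 u <;> simp [h, add_mul]
  map_smul' r w := by
    funext q
    simp only [Pi.smul_apply, RingHom.id_apply, smul_eq_mul]
    rw [Finset.mul_sum]
    refine Finset.sum_congr rfl fun u _ => ?_
    by_cases h : K22222.Adj q.1 u <;> simp [h] <;> ring

def Phi (f : Vt → E6) : (↥K22222.edgeSet → ℝ) →ₗ[ℝ] H60 :=
  (WithLp.linearEquiv 2 ℝ (Vt × Fin 6 → ℝ)).symm.toLinearMap.comp (Phi0 f)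

lemma Phi_apply (f : Vt → E6) (w : ↥K22222.edgeSet → ℝ) (q : Vt × Fin 6) :
    Phi f w q = ∑ u : Vt,
      if h : K22222.Adj q.1 u then
        w ⟨s(q.1, u), K22222.mem_edgeSet.mpr h⟩ * (f q.1 q.2 - f u q.2) else 0 := rfl

lemma isStress_iff (f : Vt → E6) (w : ↥K22222.edgeSet → ℝ) :
    IsStress K22222 6 f w ↔ Phi f w = 0 := by
  have hterm : ∀ (v : Vt) (i : Fin 6) (u : Vt),
      (if h : K22222.Adj v u then
          w ⟨s(v, u), K22222.mem_edgeSet.mpr h⟩ • (f v - f u) else 0) i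
        = (if h : K22222.Adj v u then
          w ⟨s(v, u), K22222.mem_edgeSet.mpr h⟩ * (f v i - f u i) else 0) := by
    intro v i u
    by_cases h : K22222.Adj v u <;> simp [h]
  have hsum : ∀ (v : Vt) (i : Fin 6),
      (∑ u : Vt, if h : K22222.Adj v u then
          w ⟨s(v, u), K22222.mem_edgeSet.mpr h⟩ • (f v - f u) else 0) i
        = Phi f w (v, i) := by
    intro v i
    rw [WithLp.ofLp_sum, Finset.sum_apply i Finset.univ
      (fun u => (if h : K22222.Adj v u then
        w ⟨s(v, u), K22222.mem_edgeSet.mpr h⟩ • (f v - f u) else 0).ofLp)]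
    rw [Phi_apply]
    exact Finset.sum_congr rfl fun u _ => hterm v i u
  constructor
  · intro hs
    ext q
    have h1 := congrArg (fun x : E6 => x q.2) (hs q.1)
    simp only at h1
    rw [hsum q.1 q.2] at h1
    exact h1
  · intro h0 v
    ext i
    have h1 := congrArg (fun x : H60 => x (v, i)) h0
    rw [← hsum v i] at h1
    exact h1

/-- skew matrix from coefficients -/
def Mc (c : κT → ℝ) : Matrix (Fin 6) (Fin 6) ℝ :=
  ∑ p : {p : Fin 6 × Fin 6 // p.1 < p.2},
    c (Sum.inl p) • (Matrix.single p.1.1 p.1.2 (1:ℝ)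
      - Matrix.single p.1.2 p.1.1 (1:ℝ))

lemma std_transpose (i j : Fin 6) :
    (Matrix.single i j (1:ℝ))ᵀ = Matrix.single j i 1 := by
  ext a b
  simp only [Matrix.transpose_apply, Matrix.single, Matrix.of_apply]
  exact if_congr and_comm rfl rfl

lemma Mc_skew (c : κT → ℝ) : (Mc c)ᵀ = -Mc c := by
  unfold Mc
  rw [Matrix.transpose_sum, ← Finset.sum_neg_distrib]
  refine Finset.sum_congr rfl fun p _ => ?_
  rw [Matrix.transpose_smul, Matrix.transpose_sub, std_transpose, std_transpose]
  rw [← smul_neg, neg_sub]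

lemma skew_dot (c : κT → ℝ) (x : Fin 6 → ℝ) :
    dotProduct x (Mc c *ᵥ x) = 0 := by
  have h1 : dotProduct x (Mc c *ᵥ x)
      = dotProduct ((Mc c)ᵀ *ᵥ x) x := by
    rw [dotProduct_mulVec, ← Matrix.vecMul_transpose, Matrix.transpose_transpose]
  have h2 : dotProduct ((Mc c)ᵀ *ᵥ x) x = -(dotProduct x (Mc c *ᵥ x)) := by
    rw [Mc_skew, Matrix.neg_mulVec, neg_dotProduct, dotProduct_comm]
  rw [h2] at h1
  linarith

lemma Mc_add (c₁ c₂ : κT → ℝ) : Mc (c₁ + c₂) = Mc c₁ + Mc c₂ := by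
  unfold Mc; rw [← Finset.sum_add_distrib]
  exact Finset.sum_congr rfl fun p _ => by simp [add_smul]

lemma Mc_smul (r : ℝ) (c : κT → ℝ) : Mc (r • c) = r • Mc c := by
  unfold Mc; rw [Finset.smul_sum]
  exact Finset.sum_congr rfl fun p _ => by simp [smul_smul]

def Tmap0 (f : Vt → E6) : (κT → ℝ) →ₗ[ℝ] (Vt × Fin 6 → ℝ) where
  toFun c := fun q => (Mc c *ᵥ (f q.1)) q.2 + c (Sum.inr q.2)
  map_add' c₁ c₂ := by
    funext q
    simp only [Pi.add_apply, Mc_add, Matrix.add_mulVec]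
    ring
  map_smul' r c := by
    funext q
    simp only [Pi.smul_apply, RingHom.id_apply, smul_eq_mul, Mc_smul,
      Matrix.smul_mulVec]
    ring

def Tmap (f : Vt → E6) : (κT → ℝ) →ₗ[ℝ] H60 :=
  (WithLp.linearEquiv 2 ℝ (Vt × Fin 6 → ℝ)).symm.toLinearMap.comp (Tmap0 f)

lemma Tmap_apply (f : Vt → E6) (c : κT → ℝ) (q : Vt × Fin 6) :
    Tmap f c q = (Mc c *ᵥ (f q.1)) q.2 + c (Sum.inr q.2) := rfl

lemma ortho (f : Vt → E6) (w : ↥K22222.edgeSet → ℝ) (c : κT → ℝ) :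
    (inner ℝ (Phi f w) (Tmap f c) : ℝ) = 0 := by
  set S : Vt → Vt → ℝ := fun v u =>
    ∑ i : Fin 6, (f v i - f u i) * ((Mc c *ᵥ (f v)) i + c (Sum.inr i)) with hS
  set F : Vt × Vt → ℝ := fun p =>
    if h : K22222.Adj p.1 p.2 then
      w ⟨s(p.1, p.2), K22222.mem_edgeSet.mpr h⟩ * S p.1 p.2 else 0 with hF
  have key : (inner ℝ (Phi f w) (Tmap f c) : ℝ) = ∑ p : Vt × Vt, F p := by
    rw [PiLp.inner_apply]
    simp only [RCLike.inner_apply, conj_trivial, mul_comm ((Tmap f c).ofLp _)]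
    rw [Fintype.sum_prod_type]
    have hv : ∀ v : Vt, ∑ i : Fin 6, Phi f w (v, i) * Tmap f c (v, i)
        = ∑ u : Vt, F (v, u) := by
      intro v
      have h1 : ∀ i : Fin 6, Phi f w (v, i) * Tmap f c (v, i)
          = ∑ u : Vt, (if h : K22222.Adj v u then
              w ⟨s(v, u), K22222.mem_edgeSet.mpr h⟩ *
                ((f v i - f u i) * ((Mc c *ᵥ (f v)) i + c (Sum.inr i)))
            else 0) := by
        intro i
        rw [Phi_apply, Tmap_apply, Finset.sum_mul]
        refine Finset.sum_congr rfl fun u _ => ?_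
        by_cases h : K22222.Adj v u
        · simp only [dif_pos h]; ring
        · simp only [dif_neg h, zero_mul]
      rw [Finset.sum_congr rfl fun i _ => h1 i, Finset.sum_comm]
      refine Finset.sum_congr rfl fun u _ => ?_
      simp only [hF, hS]
      by_cases h : K22222.Adj v u
      · simp only [dif_pos h, Finset.mul_sum]
      · simp only [dif_neg h, Finset.sum_const_zero]
    rw [Finset.sum_congr rfl fun v _ => hv v, ← Fintype.sum_prod_type]
  rw [key]
  refine Finset.sum_involution (fun p _ => p.swap) ?_ ?_ (fun p hp => Finset.mem_univ _) ?_
  · -- F p + F p.swap = 0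
    rintro ⟨v, u⟩ -
    by_cases h : K22222.Adj v u
    · have h' : K22222.Adj u v := h.symm
      have hw : w ⟨s(u, v), K22222.mem_edgeSet.mpr h'⟩
          = w ⟨s(v, u), K22222.mem_edgeSet.mpr h⟩ :=
        congrArg w (Subtype.ext (Sym2.eq_swap))
      simp only [hF, Prod.swap_prod_mk, dif_pos h, dif_pos h', hw]
      rw [← mul_add]
      have hSsum : S v u + S u v = dotProduct (fun i => f v i - f u i)
          (Mc c *ᵥ (fun i => f v i - f u i)) := by
        have hmv : Mc c *ᵥ (fun i => f v i - f u i)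
            = fun i => (Mc c *ᵥ (f v)) i - (Mc c *ᵥ (f u)) i := by
          have := Matrix.mulVec_sub (Mc c) (fun i => f v i) (fun i => f u i)
          exact this
        simp only [hS, hmv, dotProduct]
        rw [← Finset.sum_add_distrib]
        refine Finset.sum_congr rfl fun i _ => ?_
        ring
      rw [hSsum, skew_dot, mul_zero]
    · have h' : ¬ K22222.Adj u v := fun hc => h hc.symm
      simp only [hF, Prod.swap_prod_mk, dif_neg h, dif_neg h', add_zero]
  · -- F p ≠ 0 → swap ≠ p
    rintro ⟨v, u⟩ - hne
    intro heq
    have : v = u := by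
      have := congrArg Prod.fst heq
      simpa using this.symm
    subst this
    apply hne
    simp only [hF, dif_neg (K22222.loopless.irrefl v)]
  · rintro ⟨v, u⟩ -
    rfl

end StressProof

section Inj

lemma Mc_entry (c : κT → ℝ) (p : {p : Fin 6 × Fin 6 // p.1 < p.2}) :
    Mc c p.1.1 p.1.2 = c (Sum.inl p) := by
  unfold Mc
  rw [Matrix.sum_apply]
  rw [Finset.sum_eq_single p]
  · have hne : (p.1.1 : Fin 6) ≠ p.1.2 := ne_of_lt p.2
    rw [Matrix.smul_apply, Matrix.sub_apply, Matrix.single_apply_same,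
      Matrix.single_apply_of_ne _ _ _ _ _ (by tauto), smul_eq_mul]
    ring
  · intro q _ hq
    have h1 : ¬(q.1.1 = p.1.1 ∧ q.1.2 = p.1.2) := by
      intro hc
      exact hq (Subtype.ext (Prod.ext hc.1 hc.2))
    have h2 : ¬(q.1.2 = p.1.1 ∧ q.1.1 = p.1.2) := by
      rintro ⟨ha, hb⟩
      have := q.2
      rw [ha, hb] at this
      exact absurd p.2 (not_lt_of_gt this)
    rw [Matrix.smul_apply, Matrix.sub_apply,
      Matrix.single_apply_of_ne _ _ _ _ _ h1,
      Matrix.single_apply_of_ne _ _ _ _ _ h2, smul_eq_mul]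
    ring
  · intro h
    exact absurd (Finset.mem_univ p) h

lemma Tinj (f : Vt → E6) (hdet : (Mf f).det ≠ 0) : Function.Injective (Tmap f) := by
  rw [injective_iff_map_eq_zero]
  intro c hc
  have hq : ∀ (v : Vt) (i : Fin 6), (Mc c *ᵥ (f v)) i + c (Sum.inr i) = 0 := by
    intro v i
    have := congrArg (fun x : H60 => x (v, i)) hc
    rw [Tmap_apply] at this
    exact this
  have hdiff : ∀ v u : Vt, (Mc c *ᵥ (f v)) = (Mc c *ᵥ (f u)) := by
    intro v u
    funext i
    have h1 := hq v i
    have h2 := hq u i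
    linarith
  have hmul : Mc c * Mf f = 0 := by
    ext i k
    rw [Matrix.mul_apply, Matrix.zero_apply]
    have hterm : ∀ j, Mc c i j * Mf f j k
        = Mc c i j * f (vtx k) j - Mc c i j * f ((0:Fin 5),(0:Fin 2)) j := by
      intro j; unfold Mf; ring
    rw [Finset.sum_congr rfl fun j _ => hterm j, Finset.sum_sub_distrib]
    have h2 := congrFun (hdiff (vtx k) ((0:Fin 5),(0:Fin 2))) i
    simpa [Matrix.mulVec, dotProduct, sub_eq_zero] using h2
  have hMc : Mc c = 0 := by
    have hu : IsUnit (Mf f).det := isUnit_iff_ne_zero.mpr hdet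
    calc Mc c = Mc c * (Mf f * (Mf f)⁻¹) := by rw [Matrix.mul_nonsing_inv _ hu, mul_one]
    _ = (Mc c * Mf f) * (Mf f)⁻¹ := by rw [mul_assoc]
    _ = 0 := by rw [hmul, zero_mul]
  funext x
  cases x with
  | inl p =>
    have h1 := Mc_entry c p
    rw [hMc] at h1
    simpa using h1.symm
  | inr i =>
    have h1 := hq ((0:Fin 5),(0:Fin 2)) i
    rw [hMc, Matrix.zero_mulVec] at h1
    simpa using h1

end Inj

def adjDec : DecidableRel K22222.Adj := fun x y => decidable_of_iff (x.1 ≠ y.1) Iff.rfl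

section CardE
attribute [local instance] adjDec

lemma ncardE : K22222.edgeSet.ncard = 40 := by
  rw [Set.ncard_eq_toFinset_card']
  decide

end CardE

lemma cardE (inst : Fintype ↥K22222.edgeSet) : @Fintype.card _ inst = 40 := by
  rw [← Nat.card_eq_fintype_card, Nat.card_coe_set_eq, ncardE]

lemma cardK : Fintype.card κT = 21 := by decide

lemma main_lemma (f : Vt → E6) (hdet : (Mf f).det ≠ 0) :
    f ∉ StressFreeEmbeddings K22222 6 := by
  intro hsf
  have hinj : Function.Injective (Phi f) := by
    rw [injective_iff_map_eq_zero]
    intro w hw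
    exact hsf w ((isStress_iff f w).mpr hw)
  have h40 : Module.finrank ℝ ↥(LinearMap.range (Phi f)) = 40 := by
    rw [LinearMap.finrank_range_of_inj hinj, Module.finrank_fintype_fun_eq_card, cardE]
  have h21 : Module.finrank ℝ ↥(LinearMap.range (Tmap f)) = 21 := by
    rw [LinearMap.finrank_range_of_inj (Tinj f hdet), Module.finrank_fintype_fun_eq_card,
      cardK]
  have hinf : LinearMap.range (Phi f) ⊓ LinearMap.range (Tmap f) = ⊥ := by
    rw [eq_bot_iff]
    rintro x ⟨⟨w, hw⟩, ⟨c, hc⟩⟩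
    have hx : (inner ℝ x x : ℝ) = 0 := by
      nth_rewrite 1 [← hw]
      rw [← hc]
      exact ortho f w c
    simpa using inner_self_eq_zero.mp hx
  have hsum := Submodule.finrank_sup_add_finrank_inf_eq
    (LinearMap.range (Phi f)) (LinearMap.range (Tmap f))
  rw [hinf, h40, h21, finrank_bot] at hsum
  have hle := Submodule.finrank_le (LinearMap.range (Phi f) ⊔ LinearMap.range (Tmap f))
  have hH : Module.finrank ℝ H60 = 60 := by
    rw [finrank_euclideanSpace]
    simp
  omega

def f₀ : Vt → E6 := fun v => WithLp.toLp 2 (fun i => if v = vtx i then (1:ℝ) else 0)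

lemma Mf_f₀ : Mf f₀ = 1 := by
  ext i k
  have h2 : ((0 : Fin 5), (0 : Fin 2)) ≠ vtx i := by revert i; decide
  have h3 : (0 : Vt) ≠ vtx i := h2
  by_cases h : k = i
  · subst h; simp [Mf, f₀, Matrix.one_apply, h2, h3]
  · have h1 : vtx k ≠ vtx i := by revert h; revert k i; decide
    simp [Mf, f₀, Matrix.one_apply, h1, h2, h3, Ne.symm h]

lemma det_f₀ : (Mf f₀).det ≠ 0 := by
  rw [Mf_f₀, Matrix.det_one]
  norm_num

lemma cont_det : Continuous fun f : Vt → E6 => (Mf f).det := by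
  apply Continuous.matrix_det
  apply continuous_matrix
  intro i k
  exact ((EuclideanSpace.proj i).continuous.comp (continuous_apply (vtx k))).sub
    ((EuclideanSpace.proj i).continuous.comp (continuous_apply _))

theorem not_gsf : ¬ GenericallyStressFree K22222 6 := by
  rintro ⟨-, hdense⟩
  have hopen : IsOpen {f : Vt → E6 | (Mf f).det ≠ 0} := by
    have : {f : Vt → E6 | (Mf f).det ≠ 0}
        = (fun f : Vt → E6 => (Mf f).det) ⁻¹' ({0}ᶜ) := rfl
    rw [this]
    exact cont_det.isOpen_preimage _ (isOpen_compl_iff.mpr isClosed_singleton)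
  obtain ⟨f, hf, hfU⟩ := hdense.exists_mem_open hopen ⟨f₀, det_f₀⟩
  exact main_lemma f hfU hf




/-- `K_{2,2,2,2,2}` has no `K₈` minor, yet it is not generically `6`-stress free.
Consequently, "every `K₈`-minor free graph is generically `6`-stress free" fails. -/
theorem K22222_counterexample :
    (¬ HasMinor K22222 (⊤ : SimpleGraph (Fin 8))) ∧
    (¬ GenericallyStressFree K22222 6) ∧
    ¬ (∀ (V : Type) [Fintype V] (G : SimpleGraph V),
        ¬ HasMinor G (⊤ : SimpleGraph (Fin 8)) → GenericallyStressFree G 6) := by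
  refine ⟨no_K8_minor, not_gsf, fun h => not_gsf (h _ K22222 no_K8_minor)⟩
end

section
/- Let G be a finite simple graph with linearly ordered vertex set, let d ≥ 1, and let {v,u} be an edge of G whose endpoints have at most d−1 common neighbors. If the contraction G/{v,u} is d-acyclic, then G is d-acyclic. -/
open scoped Classical

/-- The linear "rigidity-type" map of Kalai's hyperconnectivity: for `α : Fin d → V → ℝ`,
it sends `w : E(G) → ℝ` to the function `(i, x) ↦ Σ_{y ~ x, x < y} w({x,y})·α i y
− Σ_{y ~ x, y < x} w({x,y})·α i y`. -/
noncomputable def rigMap {V : Type*} [Fintype V] [LinearOrder V] (G : SimpleGraph V)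
    (d : ℕ) (α : Fin d → V → ℝ) (w : G.edgeSet → ℝ) : Fin d × V → ℝ :=
  fun p =>
    (∑ y : V, if h : G.Adj p.2 y ∧ p.2 < y then
        w ⟨s(p.2, y), G.mem_edgeSet.mpr h.1⟩ * α p.1 y else 0)
    - (∑ y : V, if h : G.Adj p.2 y ∧ y < p.2 then
        w ⟨s(p.2, y), G.mem_edgeSet.mpr h.1⟩ * α p.1 y else 0)

/-- `G` is `d`-acyclic: the set of `α` for which `rigMap G d α` is injective is open
and dense in the space of all `α : Fin d → V → ℝ` (product topology). -/
def DAcyclic {V : Type*} [Fintype V] [LinearOrder V] (G : SimpleGraph V) (d : ℕ) : Prop :=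
  IsOpen {α : Fin d → V → ℝ | Function.Injective (rigMap G d α)} ∧
  Dense {α : Fin d → V → ℝ | Function.Injective (rigMap G d α)}

/-- The contraction `G/{v,u}`: the simple graph on `V(G) ∖ {u}` in which distinct
`x, y` are adjacent iff `{x,y} ∈ E(G)`, or `x = v` and `{u,y} ∈ E(G)`, or `y = v`
and `{x,u} ∈ E(G)`. -/
def contractEdge {V : Type*} (G : SimpleGraph V) (v u : V) :
    SimpleGraph {x : V // x ≠ u} where
  Adj x y := x ≠ y ∧
    (G.Adj x.1 y.1 ∨ (x.1 = v ∧ G.Adj u y.1) ∨ (y.1 = v ∧ G.Adj x.1 u))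
  symm := by
    constructor
    rintro x y ⟨hxy, h | ⟨h1, h2⟩ | ⟨h1, h2⟩⟩
    · exact ⟨hxy.symm, Or.inl h.symm⟩
    · exact ⟨hxy.symm, Or.inr (Or.inr ⟨h1, h2.symm⟩)⟩
    · exact ⟨hxy.symm, Or.inr (Or.inl ⟨h1, h2.symm⟩)⟩
  loopless := ⟨fun _ h => h.1 rfl⟩

set_option linter.unusedSectionVars false
namespace DAux
open Finset Matrix

variable {V : Type*} [Fintype V] [LinearOrder V]

noncomputable def sgn (x y : V) : ℝ := if x < y then 1 else -1

lemma sgn_ne_zero (x y : V) : sgn x y ≠ 0 := by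
  unfold sgn; split_ifs <;> norm_num

lemma sgn_mul_self (x y : V) : sgn x y * sgn x y = 1 := by
  unfold sgn; split_ifs <;> norm_num

lemma sgn_symm {x y : V} (h : x ≠ y) : sgn y x = -sgn x y := by
  unfold sgn
  rcases lt_or_gt_of_ne h with h' | h'
  · rw [if_pos h', if_neg (not_lt.2 h'.le)]
  · rw [if_neg (not_lt.2 h'.le), if_pos h']; norm_num

noncomputable def ow (G : SimpleGraph V) (w : G.edgeSet → ℝ) (x y : V) : ℝ :=
  if h : G.Adj x y then w ⟨s(x,y), G.mem_edgeSet.mpr h⟩ else 0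

lemma ow_symm (G : SimpleGraph V) (w : G.edgeSet → ℝ) (x y : V) :
    ow G w x y = ow G w y x := by
  unfold ow
  by_cases h : G.Adj x y
  · rw [dif_pos h, dif_pos h.symm]
    congr 1
    exact Subtype.ext (Sym2.eq_swap)
  · rw [dif_neg h, dif_neg (fun h' => h h'.symm)]

lemma ow_of_not_adj {G : SimpleGraph V} {x y : V} (h : ¬ G.Adj x y) (w : G.edgeSet → ℝ) :
    ow G w x y = 0 := dif_neg h

lemma ow_self (G : SimpleGraph V) (w : G.edgeSet → ℝ) (x : V) : ow G w x x = 0 :=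
  ow_of_not_adj (G.loopless.irrefl x) w

lemma ow_apply {G : SimpleGraph V} {x y : V} (h : G.Adj x y) (w : G.edgeSet → ℝ) :
    ow G w x y = w ⟨s(x,y), G.mem_edgeSet.mpr h⟩ := dif_pos h

lemma rigMap_eq (G : SimpleGraph V) (d : ℕ) (α : Fin d → V → ℝ) (w : G.edgeSet → ℝ)
    (p : Fin d × V) :
    rigMap G d α w p = ∑ y : V, sgn p.2 y * ow G w p.2 y * α p.1 y := by
  unfold rigMap
  rw [← Finset.sum_sub_distrib]
  refine Finset.sum_congr rfl (fun y _ => ?_)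
  unfold sgn ow
  by_cases hadj : G.Adj p.2 y
  · rcases lt_trichotomy p.2 y with h | h | h
    · rw [dif_pos ⟨hadj, h⟩, dif_neg (fun hc => absurd h (not_lt.2 hc.2.le)), dif_pos hadj,
        if_pos h]
      ring
    · exact absurd h hadj.ne
    · rw [dif_neg (fun hc => absurd h (not_lt.2 hc.2.le)), dif_pos ⟨hadj, h⟩, dif_pos hadj,
        if_neg (not_lt.2 h.le)]
      ring
  · rw [dif_neg (fun hc => hadj hc.1), dif_neg (fun hc => hadj hc.1), dif_neg hadj]
    ring


variable {d : ℕ} {G : SimpleGraph V}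

noncomputable def colM (G : SimpleGraph V) (d : ℕ) (α : Fin d → V → ℝ) :
    Matrix (Fin d × V) G.edgeSet ℝ := fun p e => rigMap G d α (Pi.single e 1) p

lemma mulVec_colM (α : Fin d → V → ℝ) (w : G.edgeSet → ℝ) :
    (colM G d α).mulVec w = rigMap G d α w := by
  funext p
  rw [rigMap_eq]
  unfold Matrix.mulVec dotProduct colM
  simp only [rigMap_eq, Finset.sum_mul]
  rw [Finset.sum_comm]
  refine Finset.sum_congr rfl (fun y _ => ?_)
  by_cases h : G.Adj p.2 y
  · simp only [ow_apply h, Pi.single_apply]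
    rw [Finset.sum_congr rfl (fun e (_ : e ∈ Finset.univ) => show
        sgn p.2 y * (if (⟨s(p.2,y), G.mem_edgeSet.mpr h⟩ : G.edgeSet) = e then (1:ℝ) else 0)
          * α p.1 y * w e
        = (if (⟨s(p.2,y), G.mem_edgeSet.mpr h⟩ : G.edgeSet) = e then
            sgn p.2 y * w e * α p.1 y else 0) from by split_ifs <;> ring)]
    rw [Finset.sum_ite_eq]
    simp only [Finset.mem_univ, if_true]
  · simp [ow_of_not_adj h]

open Matrix in
lemma injective_iff_ker (α : Fin d → V → ℝ) :
    Function.Injective (rigMap G d α) ↔ ∀ w, rigMap G d α w = 0 → w = 0 := by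
  constructor
  · intro hinj w hw
    apply hinj
    rw [hw, ← mulVec_colM, Matrix.mulVec_zero]
  · intro hker w1 w2 hw
    have h0 : rigMap G d α (w1 - w2) = 0 := by
      rw [← mulVec_colM, Matrix.mulVec_sub, mulVec_colM, mulVec_colM, hw, sub_self]
    exact sub_eq_zero.1 (hker _ h0)

open Matrix in
lemma injective_iff_det (α : Fin d → V → ℝ) :
    Function.Injective (rigMap G d α) ↔ ((colM G d α)ᵀ * colM G d α).det ≠ 0 := by
  rw [injective_iff_ker]
  constructor
  · intro hker hdet
    rw [← Matrix.exists_mulVec_eq_zero_iff] at hdet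
    obtain ⟨w, hw0, hw⟩ := hdet
    refine hw0 (hker w ?_)
    rw [← mulVec_colM]
    have h3 := Matrix.dotProduct_mulVec w (colM G d α)ᵀ ((colM G d α).mulVec w)
    rw [Matrix.vecMul_transpose] at h3
    rw [Matrix.mulVec_mulVec, hw, dotProduct_zero] at h3
    exact dotProduct_self_eq_zero.1 h3.symm
  · intro hdet w hw
    by_contra hw0
    exact hdet (Matrix.exists_mulVec_eq_zero_iff.mp ⟨w, hw0, by
      rw [← Matrix.mulVec_mulVec, mulVec_colM, hw, Matrix.mulVec_zero]⟩)

lemma rigMap_affine (α β : Fin d → V → ℝ) (t : ℝ) (w : G.edgeSet → ℝ) (p : Fin d × V) :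
    rigMap G d (α + t • β) w p = rigMap G d α w p + t * rigMap G d β w p := by
  simp only [rigMap_eq, ← Finset.sum_add_distrib, Finset.mul_sum]
  refine Finset.sum_congr rfl fun y _ => ?_
  simp only [Pi.add_apply, Pi.smul_apply, smul_eq_mul]
  ring

lemma colM_affine (α β : Fin d → V → ℝ) (t : ℝ) (p : Fin d × V) (e : G.edgeSet) :
    colM G d (α + t • β) p e = colM G d α p e + t * colM G d β p e :=
  rigMap_affine α β t _ p

lemma isOpen_inj (G : SimpleGraph V) (d : ℕ) :
    IsOpen {α : Fin d → V → ℝ | Function.Injective (rigMap G d α)} := by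
  have hiff : ∀ α : Fin d → V → ℝ, Function.Injective (rigMap G d α) ↔
      LinearIndependent ℝ (fun e : G.edgeSet => fun p => colM G d α p e) := by
    intro α
    rw [injective_iff_ker, Fintype.linearIndependent_iff]
    have key : ∀ w : G.edgeSet → ℝ,
        (∑ e : G.edgeSet, w e • (fun p => colM G d α p e)) = rigMap G d α w := by
      intro w
      funext p
      rw [← mulVec_colM]
      simp only [Finset.sum_apply, Pi.smul_apply, smul_eq_mul, Matrix.mulVec,
        dotProduct]
      exact Finset.sum_congr rfl fun e _ => mul_comm _ _
    constructor
    · intro hker g hg e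
      have hg0 : g = 0 := hker g (by rw [← key]; exact hg)
      simp [hg0]
    · intro hli w hw
      funext e
      exact hli w (by rw [key, hw]) e
  have hset : {α : Fin d → V → ℝ | Function.Injective (rigMap G d α)}
      = (fun (α : Fin d → V → ℝ) => fun e : G.edgeSet => fun p => colM G d α p e) ⁻¹'
        {f : G.edgeSet → (Fin d × V → ℝ) | LinearIndependent ℝ f} := by
    ext α; exact hiff α
  rw [hset]
  refine (isOpen_setOf_linearIndependent).preimage ?_
  refine continuous_pi fun e => continuous_pi fun p => ?_
  have hrw : (fun α : Fin d → V → ℝ => colM G d α p e)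
      = fun α => ∑ y : V, sgn p.2 y * ow G (Pi.single e 1) p.2 y * α p.1 y := by
    funext α; exact rigMap_eq G d α _ p
  rw [hrw]
  exact continuous_finset_sum _ fun y _ =>
    continuous_const.mul ((continuous_apply y).comp (continuous_apply p.1))

lemma dense_inj (G : SimpleGraph V) (d : ℕ)
    (hex : ∃ α : Fin d → V → ℝ, Function.Injective (rigMap G d α)) :
    Dense {α : Fin d → V → ℝ | Function.Injective (rigMap G d α)} := by
  obtain ⟨α₁, hα₁⟩ := hex
  rw [dense_iff_inter_open]
  rintro U hU ⟨α, hαU⟩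
  set β := α₁ - α with hβ
  set N : Matrix (Fin d × V) G.edgeSet (Polynomial ℝ) :=
    fun p e => Polynomial.C (colM G d α p e) + Polynomial.X * Polynomial.C (colM G d β p e)
    with hN
  set q : Polynomial ℝ := (Nᵀ * N).det with hq
  have heval : ∀ t : ℝ,
      q.eval t = ((colM G d (α + t • β))ᵀ * colM G d (α + t • β)).det := by
    intro t
    have hmap : N.map (Polynomial.evalRingHom t) = colM G d (α + t • β) := by
      ext p e
      rw [Matrix.map_apply]
      simp only [Matrix.map_apply, hN, Polynomial.coe_evalRingHom, Polynomial.eval_add,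
        Polynomial.eval_C, Polynomial.eval_mul, Polynomial.eval_X]
      rw [colM_affine]
    have h1 : q.eval t = (Polynomial.evalRingHom t) ((Nᵀ * N).det) := rfl
    rw [h1, RingHom.map_det, RingHom.mapMatrix_apply, Matrix.map_mul, Matrix.transpose_map,
      hmap]
  have hone : α + (1:ℝ) • β = α₁ := by
    rw [hβ]; funext i x; simp
  have hq1 : q.eval 1 ≠ 0 := by
    rw [heval 1, hone]
    exact (injective_iff_det α₁).1 hα₁
  have hq0 : q ≠ 0 := fun hc => hq1 (by rw [hc]; simp)
  have hroots : {t : ℝ | q.IsRoot t}.Finite := Polynomial.finite_setOf_isRoot hq0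
  have hdense : Dense {t : ℝ | q.IsRoot t}ᶜ := Set.Countable.dense_compl ℝ hroots.countable
  have hf : Continuous (fun t : ℝ => α + t • β) :=
    continuous_const.add (continuous_id.smul continuous_const)
  have h0 : (0:ℝ) ∈ (fun t : ℝ => α + t • β) ⁻¹' U := by
    simp only [Set.mem_preimage, zero_smul, add_zero]
    exact hαU
  obtain ⟨t, htU, htq⟩ := hdense.inter_open_nonempty _ (hU.preimage hf) ⟨0, h0⟩
  refine ⟨α + t • β, htU, ?_⟩
  rw [Set.mem_setOf_eq, injective_iff_det, ← heval t]
  exact htq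

lemma dAcyclic_iff (G : SimpleGraph V) (d : ℕ) :
    DAcyclic G d ↔ ∃ α : Fin d → V → ℝ, Function.Injective (rigMap G d α) := by
  constructor
  · intro hD
    obtain ⟨α, hα⟩ := hD.2.nonempty
    exact ⟨α, hα⟩
  · intro hex
    exact ⟨isOpen_inj G d, dense_inj G d hex⟩

lemma sgn_coe {p : V → Prop} (x y : Subtype p) : sgn x y = sgn x.1 y.1 := by
  unfold sgn
  simp only [← Subtype.coe_lt_coe]

lemma sgn_self (x : V) : sgn x x = -1 := if_neg (lt_irrefl x)

end DAux

namespace DAux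

lemma core {n : ℕ} (G : SimpleGraph (Fin n)) (d : ℕ) (v u : Fin n) (hvu : G.Adj v u)
    (α₀ : Fin d → {x : Fin n // x ≠ u} → ℝ)
    (hinj : Function.Injective (rigMap (contractEdge G v u) d α₀))
    (hli : ∀ c : Fin n → ℝ,
      (∀ x, x ∉ (G.neighborSet v ∩ G.neighborSet u ∪ {v} : Set (Fin n)) → c x = 0) →
      (∀ i : Fin d, ∑ x : Fin n,
        c x * (if h : x = u then α₀ i ⟨v, hvu.ne⟩ else α₀ i ⟨x, h⟩) = 0) →
      ∀ x, c x = 0) :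
    ∃ α : Fin d → Fin n → ℝ, Function.Injective (rigMap G d α) := by
  have hne : v ≠ u := hvu.ne
  set α : Fin d → Fin n → ℝ :=
    fun i x => if h : x = u then α₀ i ⟨v, hne⟩ else α₀ i ⟨x, h⟩ with hα
  refine ⟨α, (injective_iff_ker α).2 ?_⟩
  intro w hw
  set K := contractEdge G v u with hK
  set ω : Fin n → Fin n → ℝ := ow G w with hω
  have hωsymm : ∀ x y, ω x y = ω y x := fun x y => ow_symm G w x y
  have hω0 : ∀ {x y}, ¬ G.Adj x y → ω x y = 0 := fun h => ow_of_not_adj h w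
  have hωd : ∀ x, ω x x = 0 := fun x => ow_self G w x
  have H0 : ∀ (i : Fin d) (x : Fin n), ∑ y : Fin n, sgn x y * ω x y * α i y = 0 := by
    intro i x
    have h1 := congrFun hw (i, x)
    rwa [rigMap_eq] at h1
  set sg : Fin n → ℝ := fun z => sgn z u * sgn z v with hsg
  have hsg_ne : ∀ z, sg z ≠ 0 := fun z => mul_ne_zero (sgn_ne_zero z u) (sgn_ne_zero z v)
  set inner : {x : Fin n // x ≠ u} → {x : Fin n // x ≠ u} → ℝ := fun x y =>
    ω x.1 y.1 + (if x.1 = v then sg y.1 * ω u y.1 else 0)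
      + (if y.1 = v then sg x.1 * ω x.1 u else 0) with hinner
  set ω' : {x : Fin n // x ≠ u} → {x : Fin n // x ≠ u} → ℝ :=
    fun x y => if x = y then 0 else inner x y with hω'
  have hω'symm : ∀ x y, ω' x y = ω' y x := by
    intro x y
    by_cases hxy : x = y
    · rw [hω']; simp [hxy]
    · rw [hω']
      simp only []
      rw [if_neg hxy, if_neg (Ne.symm hxy), hinner]
      simp only []
      rw [hωsymm x.1 y.1, hωsymm x.1 u, hωsymm y.1 u]
      ring
  set w' : K.edgeSet → ℝ := fun e => Sym2.lift ⟨ω', hω'symm⟩ e.1 with hw'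
  have howK : ∀ x y : {x : Fin n // x ≠ u}, ow K w' x y = ω' x y := by
    intro x y
    by_cases hadj : K.Adj x y
    · rw [ow_apply hadj]
      rw [hw']
      exact Sym2.lift_mk _ x y
    · rw [ow_of_not_adj hadj]
      by_cases hxy : x = y
      · simp only [hω', if_pos hxy]
      · simp only [hω', if_neg hxy, hinner]
        have h1 : ¬ G.Adj x.1 y.1 := fun hc => hadj (And.intro hxy (Or.inl hc))
        have h2 : (if x.1 = v then sg y.1 * ω u y.1 else 0) = 0 := by
          by_cases hx : x.1 = v
          · rw [if_pos hx, hω0 (fun hc => hadj (And.intro hxy (Or.inr (Or.inl ⟨hx, hc⟩)))), mul_zero]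
          · exact if_neg hx
        have h3 : (if y.1 = v then sg x.1 * ω x.1 u else 0) = 0 := by
          by_cases hy : y.1 = v
          · rw [if_pos hy, hω0 (fun hc => hadj (And.intro hxy (Or.inr (Or.inr ⟨hy, hc⟩)))), mul_zero]
          · exact if_neg hy
        rw [hω0 h1, h2, h3]
        ring
  have hαy : ∀ (i : Fin d) (y : {z : Fin n // z ≠ u}), α i y.1 = α₀ i y := by
    intro i y
    simp only [hα]
    rw [dif_neg y.2]
  have hαu : ∀ i : Fin d, α i u = α₀ i ⟨v, hne⟩ := by
    intro i
    simp only [hα]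
    simp
  have hsum : ∀ f : Fin n → ℝ,
      ∑ y : {z : Fin n // z ≠ u}, f y.1 = (∑ y : Fin n, f y) - f u := by
    intro f
    rw [eq_sub_iff_add_eq, ← Finset.sum_subtype (Finset.univ.erase u)
      (fun x => by simp [Finset.mem_erase]) f]
    exact Finset.sum_erase_add _ _ (Finset.mem_univ u)
  have hsub : ∀ (i : Fin d) (b : Fin n),
      ∑ y : {z : Fin n // z ≠ u}, sgn b y.1 * ω b y.1 * α₀ i y
        = - (sgn b u * ω b u * α₀ i ⟨v, hne⟩) := by
    intro i b
    have h1 : ∑ y : {z : Fin n // z ≠ u}, sgn b y.1 * ω b y.1 * α₀ i y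
        = ∑ y : {z : Fin n // z ≠ u}, sgn b y.1 * ω b y.1 * α i y.1 :=
      Finset.sum_congr rfl fun y _ => by rw [hαy i y]
    rw [h1, hsum (fun z => sgn b z * ω b z * α i z), H0 i b, hαu i]
    ring
  have HK : rigMap K d α₀ w' = 0 := by
    funext p
    obtain ⟨i, x⟩ := p
    show rigMap K d α₀ w' (i, x) = 0
    rw [rigMap_eq]
    show (∑ y : {z : Fin n // z ≠ u}, sgn x y * ow K w' x y * α₀ i y) = 0
    rw [Finset.sum_congr rfl (fun y (_ : y ∈ Finset.univ) => by rw [howK x y])]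
    have step1 : ∑ y : {z : Fin n // z ≠ u}, sgn x y * ω' x y * α₀ i y
        = (∑ y : {z : Fin n // z ≠ u}, sgn x y * inner x y * α₀ i y)
          - sgn x x * inner x x * α₀ i x := by
      rw [eq_sub_iff_add_eq,
        ← Finset.sum_erase_add Finset.univ
          (fun y : {z : Fin n // z ≠ u} => sgn x y * ω' x y * α₀ i y) (Finset.mem_univ x),
        ← Finset.sum_erase_add Finset.univ
          (fun y : {z : Fin n // z ≠ u} => sgn x y * inner x y * α₀ i y) (Finset.mem_univ x)]
      have hdd : ω' x x = 0 := by simp only [hω', if_pos rfl]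
      have hcong : ∑ y ∈ Finset.univ.erase x, sgn x y * ω' x y * α₀ i y
          = ∑ y ∈ Finset.univ.erase x, sgn x y * inner x y * α₀ i y :=
        Finset.sum_congr rfl fun y hy => by
          have hxy : ¬ x = y := fun hc => (Finset.mem_erase.1 hy).1 hc.symm
          simp only [hω', if_neg hxy]
      rw [hcong, hdd]
      ring
    have hexp : ∑ y : {z : Fin n // z ≠ u}, sgn x y * inner x y * α₀ i y
        = (∑ y : {z : Fin n // z ≠ u}, sgn x.1 y.1 * ω x.1 y.1 * α₀ i y)
        + (∑ y : {z : Fin n // z ≠ u},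
            (if x.1 = v then sgn x.1 y.1 * (sg y.1 * ω u y.1) * α₀ i y else 0))
        + (∑ y : {z : Fin n // z ≠ u},
            (if y.1 = v then sgn x.1 y.1 * (sg x.1 * ω x.1 u) * α₀ i y else 0)) := by
      rw [← Finset.sum_add_distrib, ← Finset.sum_add_distrib]
      refine Finset.sum_congr rfl fun y _ => ?_
      rw [sgn_coe]
      simp only [hinner]
      split_ifs <;> ring
    have hT3 : ∑ y : {z : Fin n // z ≠ u},
          (if y.1 = v then sgn x.1 y.1 * (sg x.1 * ω x.1 u) * α₀ i y else 0)
        = sgn x.1 u * ω x.1 u * α₀ i ⟨v, hne⟩ := by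
      have hstep : ∀ y : {z : Fin n // z ≠ u},
          (if y.1 = v then sgn x.1 y.1 * (sg x.1 * ω x.1 u) * α₀ i y else 0)
          = (if y = (⟨v, hne⟩ : {z : Fin n // z ≠ u}) then
              sgn x.1 v * (sg x.1 * ω x.1 u) * α₀ i ⟨v, hne⟩ else 0) := by
        intro y
        by_cases hy : y = (⟨v, hne⟩ : {z : Fin n // z ≠ u})
        · subst hy
          rw [if_pos rfl, if_pos rfl]
        · rw [if_neg (fun hc => hy (Subtype.ext hc)), if_neg hy]
      rw [Finset.sum_congr rfl (fun y _ => hstep y), Finset.sum_ite_eq' Finset.univ]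
      rw [if_pos (Finset.mem_univ _)]
      have hss : sgn x.1 v * (sg x.1 * ω x.1 u) * α₀ i ⟨v, hne⟩
          = (sgn x.1 v * sgn x.1 v) * (sgn x.1 u * ω x.1 u * α₀ i ⟨v, hne⟩) := by
        simp only [hsg]; ring
      rw [hss, sgn_mul_self, one_mul]
    rw [step1, hexp, hsub i x.1, hT3]
    by_cases hx : x.1 = v
    · have hxv : x = (⟨v, hne⟩ : {z : Fin n // z ≠ u}) := Subtype.ext hx
      subst hxv
      have hT2 : ∑ y : {z : Fin n // z ≠ u},
            (if ((⟨v, hne⟩ : {z : Fin n // z ≠ u})).1 = v then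
              sgn ((⟨v, hne⟩ : {z : Fin n // z ≠ u})).1 y.1 * (sg y.1 * ω u y.1) * α₀ i y
            else 0)
          = - (sgn u v * ω u v * α₀ i ⟨v, hne⟩)
            + sgn v v * (sg v * ω u v) * α₀ i ⟨v, hne⟩ := by
        have hpos : ∀ y : {z : Fin n // z ≠ u},
            (if ((⟨v, hne⟩ : {z : Fin n // z ≠ u})).1 = v then
              sgn ((⟨v, hne⟩ : {z : Fin n // z ≠ u})).1 y.1 * (sg y.1 * ω u y.1) * α₀ i y
            else 0) = sgn v y.1 * (sg y.1 * ω u y.1) * α₀ i y := fun y => if_pos rfl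
        rw [Finset.sum_congr rfl (fun y _ => hpos y),
          ← Finset.sum_erase_add Finset.univ _
            (Finset.mem_univ (⟨v, hne⟩ : {z : Fin n // z ≠ u}))]
        congr 1
        · have hT2a : ∀ y : {z : Fin n // z ≠ u},
              y ≠ (⟨v, hne⟩ : {z : Fin n // z ≠ u}) →
              sgn v y.1 * (sg y.1 * ω u y.1) * α₀ i y = sgn u y.1 * ω u y.1 * α₀ i y := by
            intro y hy
            have hyv : y.1 ≠ v := fun hc => hy (Subtype.ext hc)
            have h1 : sgn y.1 v = -sgn v y.1 := sgn_symm (Ne.symm hyv)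
            have h2 : sgn y.1 u = -sgn u y.1 := sgn_symm (Ne.symm y.2)
            have h3 := sgn_mul_self v y.1
            simp only [hsg]
            rw [h1, h2]
            linear_combination sgn u y.1 * ω u y.1 * α₀ i y * h3
          rw [Finset.sum_congr rfl (fun y hy => hT2a y (Finset.mem_erase.1 hy).1)]
          have h5 := hsub i u
          rw [hωd u] at h5
          have h5' : ∑ y : {z : Fin n // z ≠ u}, sgn u y.1 * ω u y.1 * α₀ i y = 0 := by
            rw [h5]; ring
          have h6 := Finset.sum_erase_add Finset.univ
            (fun y : {z : Fin n // z ≠ u} => sgn u y.1 * ω u y.1 * α₀ i y)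
            (Finset.mem_univ (⟨v, hne⟩ : {z : Fin n // z ≠ u}))
          rw [h5'] at h6
          have h6' : (∑ y ∈ Finset.univ.erase (⟨v, hne⟩ : {z : Fin n // z ≠ u}),
              sgn u y.1 * ω u y.1 * α₀ i y)
              + sgn u v * ω u v * α₀ i ⟨v, hne⟩ = 0 := h6
          linarith
      rw [hT2]
      have hdiag : inner (⟨v, hne⟩ : {z : Fin n // z ≠ u}) (⟨v, hne⟩ : {z : Fin n // z ≠ u})
          = sg v * ω u v + sg v * ω u v := by
        simp only [hinner]
        rw [hωd v, hωsymm v u]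
        simp
      rw [hdiag]
      simp only [sgn_self]
      have h7 : sgn v u = - sgn u v := sgn_symm hvu.ne'
      simp only [hsg]
      rw [h7]
      simp only [sgn_self]
      ring
    · have hT2 : ∑ y : {z : Fin n // z ≠ u},
            (if x.1 = v then sgn x.1 y.1 * (sg y.1 * ω u y.1) * α₀ i y else 0) = 0 :=
        Finset.sum_eq_zero fun y _ => if_neg hx
      have hdiag : inner x x = 0 := by
        simp only [hinner, if_neg hx, hωd]
        ring
      rw [hT2, hdiag]
      ring
  have hw'0 : w' = 0 := by
    apply hinj
    rw [HK, ← mulVec_colM, Matrix.mulVec_zero]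
  have hω'0 : ∀ x y : {z : Fin n // z ≠ u}, ω' x y = 0 := by
    intro x y
    rw [← howK x y]
    unfold ow
    split
    · simp [hw'0]
    · rfl
  have E0 : ∀ (x y : {z : Fin n // z ≠ u}), x ≠ y →
      ω x.1 y.1 + (if x.1 = v then sg y.1 * ω u y.1 else 0)
        + (if y.1 = v then sg x.1 * ω x.1 u else 0) = 0 := by
    intro x y hxy
    have h := hω'0 x y
    simp only [hω', if_neg hxy, hinner] at h
    exact h
  have E2 : ∀ x : Fin n, x ≠ u → x ≠ v → ω x v + sg x * ω x u = 0 := by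
    intro x hxu hxv
    have h := E0 ⟨x, hxu⟩ ⟨v, hne⟩ (fun hc => hxv (congrArg Subtype.val hc))
    have h' : ω x v + (if x = v then sg v * ω u v else 0)
        + (if v = v then sg x * ω x u else 0) = 0 := h
    rw [if_neg hxv, if_pos rfl, add_zero] at h'
    exact h'
  have E1 : ∀ x y : Fin n, x ≠ u → y ≠ u → x ≠ y → x ≠ v → y ≠ v → ω x y = 0 := by
    intro x y hxu hyu hxy hxv hyv
    have h := E0 ⟨x, hxu⟩ ⟨y, hyu⟩ (fun hc => hxy (congrArg Subtype.val hc))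
    have h' : ω x y + (if x = v then sg y * ω u y else 0)
        + (if y = v then sg x * ω x u else 0) = 0 := h
    rw [if_neg hxv, if_neg hyv, add_zero, add_zero] at h'
    exact h'
  have hCu : ∀ y : Fin n, y ≠ u → y ≠ v → ¬ G.Adj v y → ω u y = 0 := by
    intro y hyu hyv hvy
    by_cases hadj : G.Adj u y
    · have h2 := E2 y hyu hyv
      have h3 : ω y v = 0 := by rw [hωsymm y v]; exact hω0 hvy
      rw [h3, zero_add] at h2
      have h4 := (mul_eq_zero.1 h2).resolve_left (hsg_ne y)
      rw [hωsymm u y]; exact h4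
    · exact hω0 hadj
  set c : Fin n → ℝ := fun z => sgn u z * ω u z with hc
  have hsupp : ∀ z, z ∉ (G.neighborSet v ∩ G.neighborSet u ∪ {v} : Set (Fin n)) →
      c z = 0 := by
    intro z hzS
    have hzv : z ≠ v := fun hc' => hzS (by rw [hc']; exact Set.mem_union_right _ rfl)
    by_cases hzu : z = u
    · subst hzu; simp only [hc]; rw [hωd]; ring
    · by_cases hadj : G.Adj u z
      · have hvz : ¬ G.Adj v z := fun hvz =>
          hzS (Set.mem_union_left _ ⟨hvz, hadj⟩)
        simp only [hc]
        rw [hCu z hzu hzv hvz, mul_zero]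
      · simp only [hc]; rw [hω0 hadj, mul_zero]
  have hsums : ∀ i : Fin d,
      ∑ z : Fin n, c z * (if h : z = u then α₀ i ⟨v, hvu.ne⟩ else α₀ i ⟨z, h⟩) = 0 := by
    intro i
    have h1 : ∀ z : Fin n, c z * (if h : z = u then α₀ i ⟨v, hvu.ne⟩ else α₀ i ⟨z, h⟩)
        = sgn u z * ω u z * α i z := by
      intro z
      simp only [hc, hα]
    rw [Finset.sum_congr rfl (fun z _ => h1 z)]
    exact H0 i u
  have hc0 := hli c hsupp hsums
  have hωu : ∀ z : Fin n, ω u z = 0 := by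
    intro z
    have h := hc0 z
    simp only [hc] at h
    exact (mul_eq_zero.1 h).resolve_left (sgn_ne_zero u z)
  have hωall : ∀ x y : Fin n, ω x y = 0 := by
    intro x y
    by_cases hxy : x = y
    · subst hxy; exact hωd x
    by_cases hxu : x = u
    · subst hxu; exact hωu y
    by_cases hyu : y = u
    · subst hyu; rw [hωsymm]; exact hωu x
    by_cases hyv : y = v
    · rw [hyv]
      have hxv : x ≠ v := fun hc => hxy (hc.trans hyv.symm)
      have h2 := E2 x hxu hxv
      have h3 : ω x u = 0 := by rw [hωsymm]; exact hωu x
      rw [h3, mul_zero, add_zero] at h2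
      exact h2
    by_cases hxv : x = v
    · rw [hxv]
      have h2 := E2 y hyu hyv
      have h3 : ω y u = 0 := by rw [hωsymm]; exact hωu y
      rw [h3, mul_zero, add_zero] at h2
      rw [hωsymm]; exact h2
    · exact E1 x y hxu hyu hxy hxv hyv
  funext e
  obtain ⟨e, he⟩ := e
  show w ⟨e, he⟩ = 0
  revert he
  refine Sym2.ind (fun a b => ?_) e
  intro he
  have hadj : G.Adj a b := G.mem_edgeSet.1 he
  have h2 : w ⟨s(a,b), he⟩ = 0 := by
    rw [← ow_apply hadj w]
    exact hωall a b
  exact h2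

end DAux

/-- If `{v, u}` is an edge of `G` whose endpoints have at most `d - 1` common
neighbors, and the contraction `G/{v,u}` is `d`-acyclic, then `G` is `d`-acyclic. -/
theorem dAcyclic_of_contraction {n : ℕ} (G : SimpleGraph (Fin n)) (d : ℕ) (hd : 1 ≤ d)
    (v u : Fin n) (hvu : G.Adj v u)
    (hcommon : (G.neighborSet v ∩ G.neighborSet u).ncard ≤ d - 1)
    (h : DAcyclic (contractEdge G v u) d) :
    DAcyclic G d := by
  classical
  set S : Set (Fin n) := G.neighborSet v ∩ G.neighborSet u ∪ {v} with hS
  have huS : u ∉ S := by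
    rintro (⟨-, h2⟩ | h3)
    · exact G.loopless.irrefl u h2
    · exact hvu.ne (Set.mem_singleton_iff.1 h3).symm
  set famB : (Fin d → {x : Fin n // x ≠ u} → ℝ) → ↥S → (Fin d → ℝ) :=
    fun α₀ y i => if h : (y : Fin n) = u then 0 else α₀ i ⟨y.1, h⟩ with hfamB
  -- the independence set is open
  have hUopen : IsOpen {α₀ : Fin d → {x : Fin n // x ≠ u} → ℝ |
      LinearIndependent ℝ (famB α₀)} := by
    have hpre : {α₀ : Fin d → {x : Fin n // x ≠ u} → ℝ | LinearIndependent ℝ (famB α₀)}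
        = famB ⁻¹' {f : ↥S → (Fin d → ℝ) | LinearIndependent ℝ f} := rfl
    rw [hpre]
    refine isOpen_setOf_linearIndependent.preimage ?_
    refine continuous_pi fun y => continuous_pi fun i => ?_
    by_cases hyu : (y : Fin n) = u
    · simp only [hfamB, dif_pos hyu]; exact continuous_const
    · simp only [hfamB, dif_neg hyu]
      exact (continuous_apply _).comp (continuous_apply i)
  -- the independence set is nonempty
  have hScard : Fintype.card ↥S ≤ d := by
    have h3 := Set.ncard_union_le (G.neighborSet v ∩ G.neighborSet u) ({v} : Set (Fin n))
    rw [← hS] at h3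
    have h2 : ({v} : Set (Fin n)).ncard = 1 := Set.ncard_singleton v
    have h1 : S.ncard ≤ d := by omega
    rwa [Set.ncard_eq_toFinset_card', Set.toFinset_card] at h1
  obtain ⟨emb⟩ : Nonempty (↥S ↪ Fin d) :=
    Function.Embedding.nonempty_of_card_le (by rwa [Fintype.card_fin])
  have hUne : ∃ α₀ : Fin d → {x : Fin n // x ≠ u} → ℝ, LinearIndependent ℝ (famB α₀) := by
    refine ⟨fun i z => if h : ∃ hz : z.1 ∈ S, emb ⟨z.1, hz⟩ = i then 1 else 0, ?_⟩
    have hfam_eval : ∀ (y : ↥S) (i : Fin d),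
        famB (fun i z => if h : ∃ hz : z.1 ∈ S, emb ⟨z.1, hz⟩ = i then (1:ℝ) else 0) y i
          = if emb y = i then 1 else 0 := by
      intro y i
      have hyu : (y : Fin n) ≠ u := fun hc => huS (hc ▸ y.2)
      simp only [hfamB]
      rw [dif_neg hyu]
      by_cases hyi : emb y = i
      · rw [dif_pos ⟨y.2, hyi⟩, if_pos hyi]
      · rw [dif_neg (fun hc => hyi hc.2), if_neg hyi]
    rw [Fintype.linearIndependent_iff]
    intro g hg y₀
    have hthis := congrFun hg (emb y₀)
    rw [Finset.sum_apply] at hthis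
    simp only [Pi.smul_apply, smul_eq_mul, hfam_eval, Pi.zero_apply] at hthis
    have hval : ∀ y : ↥S, g y * (if emb y = emb y₀ then (1:ℝ) else 0)
        = if y = y₀ then g y else 0 := by
      intro y
      by_cases hyy : y = y₀
      · subst hyy; rw [if_pos rfl, if_pos rfl, mul_one]
      · rw [if_neg (fun hc => hyy (emb.injective hc)), if_neg hyy, mul_zero]
    rw [Finset.sum_congr rfl (fun y _ => hval y), Finset.sum_ite_eq' Finset.univ y₀] at hthis
    simpa using hthis
  obtain ⟨α₀spec, hLIspec⟩ := hUne
  obtain ⟨α₀, hα₀U, hα₀inj⟩ := h.2.inter_open_nonempty _ hUopen ⟨α₀spec, hLIspec⟩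
  rw [DAux.dAcyclic_iff]
  refine DAux.core G d v u hvu α₀ hα₀inj ?_
  -- derive the concrete independence statement
  intro c hsupp hsum x
  by_cases hxS : x ∈ S
  · have hkey : ∑ y : ↥S, (fun y : ↥S => c y.1) y • famB α₀ y = 0 := by
      funext i
      rw [Finset.sum_apply]
      simp only [Pi.smul_apply, smul_eq_mul]
      have h1 : ∀ y : ↥S, c y.1 * famB α₀ y i
          = c y.1 * (if h : (y : Fin n) = u then α₀ i ⟨v, hvu.ne⟩ else α₀ i ⟨y.1, h⟩) := by
        intro y
        have hyu : (y : Fin n) ≠ u := fun hc => huS (hc ▸ y.2)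
        simp only [hfamB]
        rw [dif_neg hyu, dif_neg hyu]
      rw [Finset.sum_congr rfl (fun y _ => h1 y),
        Finset.sum_set_coe
          (f := fun z => c z * (if h : z = u then α₀ i ⟨v, hvu.ne⟩ else α₀ i ⟨z, h⟩)) S,
        Finset.sum_subset (Finset.subset_univ S.toFinset) (fun z _ hz => by
          rw [hsupp z (by simp only [Set.mem_toFinset] at hz; exact hz), zero_mul])]
      exact hsum i
    exact Fintype.linearIndependent_iff.mp hα₀U (fun y : ↥S => c y.1) hkey ⟨x, hxS⟩
  · exact hsupp x hxS
end

section
/- For every integer r with 2 ≤ r ≤ 4, every finite simple graph that contains no subdivision of K_r is generically (r−2)-stress free. -/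
open scoped Classical

/-- `G` contains a subdivision of `K_r`: there are `r` distinct branch vertices
`v i` and pairwise internally disjoint paths `P i j` joining `v i` to `v j` for
`i < j`, whose internal vertices avoid all branch vertices. -/
def ContainsKSubdivision {V : Type*} (G : SimpleGraph V) (r : ℕ) : Prop :=
  ∃ v : Fin r → V, Function.Injective v ∧
    ∃ P : ∀ i j : Fin r, i < j → G.Walk (v i) (v j),
      (∀ i j (h : i < j), (P i j h).IsPath) ∧
      (∀ i j (h : i < j), ∀ x ∈ (P i j h).support, x ≠ v i → x ≠ v j → ∀ k, x ≠ v k) ∧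
      (∀ i j (h : i < j), ∀ i' j' (h' : i' < j'), (i, j) ≠ (i', j') →
        ∀ x, x ∈ (P i j h).support → x ∈ (P i' j' h').support →
          (x = v i ∨ x = v j) ∧ (x = v i' ∨ x = v j'))

namespace KSub
open SimpleGraph Finset

variable {V : Type*}

lemma contains_mono {G H : SimpleGraph V} (hGH : G ≤ H) {r : ℕ} :
    ContainsKSubdivision G r → ContainsKSubdivision H r := by
  rintro ⟨v, hinj, P, hpath, hint, hdisj⟩
  refine ⟨v, hinj, fun i j h => (P i j h).transfer H
    (fun e he => (SimpleGraph.edgeSet_mono hGH) ((P i j h).edges_subset_edgeSet he)), ?_, ?_, ?_⟩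
  · intro i j h; exact (hpath i j h).transfer _
  · intro i j h x hx; rw [SimpleGraph.Walk.support_transfer] at hx; exact hint i j h x hx
  · intro i j h i' j' h' hne x hx1 hx2
    rw [SimpleGraph.Walk.support_transfer] at hx1 hx2
    exact hdisj i j h i' j' h' hne x hx1 hx2

lemma contains_of_complete {G : SimpleGraph V} {r : ℕ} (v : Fin r → V)
    (hinj : Function.Injective v) (hadj : ∀ i j, i ≠ j → G.Adj (v i) (v j)) :
    ContainsKSubdivision G r := by
  refine ⟨v, hinj, fun i j h => SimpleGraph.Walk.cons (hadj i j h.ne) SimpleGraph.Walk.nil,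
    ?_, ?_, ?_⟩
  · intro i j h
    rw [SimpleGraph.Walk.isPath_def]
    simp [hinj.ne h.ne]
  · intro i j h x hx hxi hxj k
    simp only [SimpleGraph.Walk.support_cons, SimpleGraph.Walk.support_nil,
      List.mem_cons, List.mem_singleton] at hx
    rcases hx with rfl | rfl | h'
    · exact absurd rfl hxi
    · exact absurd rfl hxj
    · exact absurd h' List.not_mem_nil
  · intro i j h i' j' h' hne x hx1 hx2
    simp only [SimpleGraph.Walk.support_cons, SimpleGraph.Walk.support_nil,
      List.mem_cons, List.mem_singleton] at hx1 hx2
    constructor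
    · rcases hx1 with rfl | rfl | h' 
      · exact Or.inl rfl
      · exact Or.inr rfl
      · exact absurd h' List.not_mem_nil
    · rcases hx2 with rfl | rfl | h'
      · exact Or.inl rfl
      · exact Or.inr rfl
      · exact absurd h' List.not_mem_nil

/-- Delete all edges at `x`. -/
def delV (G : SimpleGraph V) (x : V) : SimpleGraph V where
  Adj u w := G.Adj u w ∧ u ≠ x ∧ w ≠ x
  symm := ⟨fun u w ⟨h, h1, h2⟩ => ⟨h.symm, h2, h1⟩⟩
  loopless := ⟨fun u h => G.loopless.irrefl u h.1⟩

lemma delV_le (G : SimpleGraph V) (x : V) : delV G x ≤ G := fun _ _ h => h.1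

/-- Delete all edges at `x` and add the edge `ab` (when `a ≠ b`). -/
def star (G : SimpleGraph V) (x a b : V) : SimpleGraph V where
  Adj u w := (G.Adj u w ∧ u ≠ x ∧ w ≠ x) ∨ (a ≠ b ∧ u = a ∧ w = b) ∨ (a ≠ b ∧ u = b ∧ w = a)
  symm := by
    constructor
    rintro u w (⟨h, h1, h2⟩ | ⟨h, rfl, rfl⟩ | ⟨h, rfl, rfl⟩)
    · exact Or.inl ⟨h.symm, h2, h1⟩
    · exact Or.inr (Or.inr ⟨h, rfl, rfl⟩)
    · exact Or.inr (Or.inl ⟨h, rfl, rfl⟩)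
  loopless := by
    constructor
    rintro u (⟨h, _, _⟩ | ⟨h, rfl, rfl⟩ | ⟨h, rfl, rfl⟩)
    · exact G.loopless.irrefl u h
    · exact h rfl
    · exact h rfl

section Lift

variable {G : SimpleGraph V} {x a b : V}

lemma star_no_adj_x (hax : a ≠ x) (hbx : b ≠ x) {m : V} : ¬ (star G x a b).Adj x m := by
  rintro (⟨_, h1, _⟩ | ⟨_, h2, _⟩ | ⟨_, h2, _⟩)
  · exact h1 rfl
  · exact hax h2.symm
  · exact hbx h2.symm

lemma star_not_through_x (hax : a ≠ x) (hbx : b ≠ x) :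
    ∀ {u w : V} (p : (star G x a b).Walk u w), u ≠ x → x ∉ p.support := by
  intro u w p
  induction p with
  | nil => intro hu; simp [Ne.symm hu]
  | cons h p ih =>
    intro hu
    rw [SimpleGraph.Walk.support_cons, List.mem_cons]
    push_neg
    refine ⟨Ne.symm hu, ih ?_⟩
    rintro rfl
    exact star_no_adj_x hax hbx h.symm

/-- The key surgery lemma: walks in `star G x a b` lift to walks in `G`,
replacing the edge `ab` by the path `a-x-b`. -/
lemma lift_walk (hxa : G.Adj x a) (hxb : G.Adj x b) {u w : V}
    (p : (star G x a b).Walk u w) (hx : x ∉ p.support) :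
    ∃ q : G.Walk u w,
      (∀ y ∈ p.support, y ∈ q.support) ∧
      (∀ y ∈ q.support, y ∈ p.support ∨ y = x) ∧
      (p.IsPath → q.IsPath) ∧
      (x ∈ q.support → a ∈ p.support ∧ b ∈ p.support) ∧
      ((a ∉ p.support ∨ b ∉ p.support) → q.support = p.support) := by
  induction p with
  | nil =>
    exact ⟨SimpleGraph.Walk.nil, by simp, by simp, fun _ => SimpleGraph.Walk.IsPath.nil, by
      simp only [SimpleGraph.Walk.support_nil, List.mem_singleton]
      rintro rfl
      exact absurd (by simp : x ∈ (SimpleGraph.Walk.nil : (star G x a b).Walk x x).support) hx,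
      fun _ => rfl⟩
  | @cons u m w h p ih =>
    have hxu : x ≠ u := by
      intro h'; exact hx (by simp [h'.symm])
    have hxp : x ∉ p.support := by
      intro h'; exact hx (by simp [h'])
    obtain ⟨q, hq1, hq2, hq3, hq4, hq5⟩ := ih hxp
    rcases id h with ⟨hG, _, _⟩ | ⟨hab, h1, h2⟩ | ⟨hab, h1, h2⟩
    · refine ⟨SimpleGraph.Walk.cons hG q, ?_, ?_, ?_, ?_, ?_⟩
      · intro y hy
        rw [SimpleGraph.Walk.support_cons, List.mem_cons] at hy ⊢
        exact hy.imp id (hq1 y)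
      · intro y hy
        rw [SimpleGraph.Walk.support_cons, List.mem_cons] at hy
        rcases hy with rfl | hy
        · exact Or.inl (by simp)
        · rcases hq2 y hy with h' | h'
          · exact Or.inl (by simp [h'])
          · exact Or.inr h'
      · intro hp
        rw [SimpleGraph.Walk.cons_isPath_iff] at hp ⊢
        refine ⟨hq3 hp.1, fun hu => ?_⟩
        rcases hq2 u hu with h' | h'
        · exact hp.2 h'
        · exact hxu h'.symm
      · intro hxq
        rw [SimpleGraph.Walk.support_cons, List.mem_cons] at hxq
        rcases hxq with h' | h'
        · exact absurd h' hxu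
        · have := hq4 h'
          exact ⟨by simp [this.1], by simp [this.2]⟩
      · intro hab'
        have : a ∉ p.support ∨ b ∉ p.support := by
          rcases hab' with h' | h'
          · exact Or.inl fun hc => h' (by simp [hc])
          · exact Or.inr fun hc => h' (by simp [hc])
        rw [SimpleGraph.Walk.support_cons, SimpleGraph.Walk.support_cons, hq5 this]
    · -- u = a, m = b : replace by the path  u - x - m
      have hux : G.Adj u x := by rw [h1]; exact hxa.symm
      have hxm : G.Adj x m := by rw [h2]; exact hxb
      refine ⟨SimpleGraph.Walk.cons hux (SimpleGraph.Walk.cons hxm q), ?_, ?_, ?_, ?_, ?_⟩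
      · intro y hy
        rw [SimpleGraph.Walk.support_cons, List.mem_cons] at hy
        rw [SimpleGraph.Walk.support_cons, SimpleGraph.Walk.support_cons]
        rcases hy with rfl | hy
        · exact List.mem_cons_self
        · exact List.mem_cons_of_mem _ (List.mem_cons_of_mem _ (hq1 y hy))
      · intro y hy
        rw [SimpleGraph.Walk.support_cons, SimpleGraph.Walk.support_cons,
          List.mem_cons, List.mem_cons] at hy
        rcases hy with rfl | rfl | hy
        · exact Or.inl (by simp)
        · exact Or.inr rfl
        · rcases hq2 y hy with h' | h'
          · exact Or.inl (by simp [h'])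
          · exact Or.inr h'
      · intro hp
        rw [SimpleGraph.Walk.cons_isPath_iff] at hp
        have habs : a ∉ p.support := h1 ▸ hp.2
        have hqsupp : q.support = p.support := hq5 (Or.inl habs)
        rw [SimpleGraph.Walk.cons_isPath_iff, SimpleGraph.Walk.cons_isPath_iff]
        refine ⟨⟨hq3 hp.1, ?_⟩, ?_⟩
        · rw [hqsupp]; exact hxp
        · rw [SimpleGraph.Walk.support_cons, List.mem_cons]
          push_neg
          refine ⟨hxu.symm, ?_⟩
          rw [hqsupp]; exact hp.2
      · intro _
        constructor
        · rw [SimpleGraph.Walk.support_cons, List.mem_cons]; exact Or.inl h1.symm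
        · rw [SimpleGraph.Walk.support_cons, List.mem_cons]
          exact Or.inr (h2 ▸ p.start_mem_support)
      · intro hab'
        exfalso
        rcases hab' with h' | h'
        · exact h' (by rw [SimpleGraph.Walk.support_cons, List.mem_cons]; exact Or.inl h1.symm)
        · exact h' (by rw [SimpleGraph.Walk.support_cons, List.mem_cons]
                       exact Or.inr (h2 ▸ p.start_mem_support))
    · -- u = b, m = a : replace by the path  u - x - m
      have hux : G.Adj u x := by rw [h1]; exact hxb.symm
      have hxm : G.Adj x m := by rw [h2]; exact hxa
      refine ⟨SimpleGraph.Walk.cons hux (SimpleGraph.Walk.cons hxm q), ?_, ?_, ?_, ?_, ?_⟩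
      · intro y hy
        rw [SimpleGraph.Walk.support_cons, List.mem_cons] at hy
        rw [SimpleGraph.Walk.support_cons, SimpleGraph.Walk.support_cons]
        rcases hy with rfl | hy
        · exact List.mem_cons_self
        · exact List.mem_cons_of_mem _ (List.mem_cons_of_mem _ (hq1 y hy))
      · intro y hy
        rw [SimpleGraph.Walk.support_cons, SimpleGraph.Walk.support_cons,
          List.mem_cons, List.mem_cons] at hy
        rcases hy with rfl | rfl | hy
        · exact Or.inl (by simp)
        · exact Or.inr rfl
        · rcases hq2 y hy with h' | h'
          · exact Or.inl (by simp [h'])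
          · exact Or.inr h'
      · intro hp
        rw [SimpleGraph.Walk.cons_isPath_iff] at hp
        have habs : b ∉ p.support := h1 ▸ hp.2
        have hqsupp : q.support = p.support := hq5 (Or.inr habs)
        rw [SimpleGraph.Walk.cons_isPath_iff, SimpleGraph.Walk.cons_isPath_iff]
        refine ⟨⟨hq3 hp.1, ?_⟩, ?_⟩
        · rw [hqsupp]; exact hxp
        · rw [SimpleGraph.Walk.support_cons, List.mem_cons]
          push_neg
          refine ⟨hxu.symm, ?_⟩
          rw [hqsupp]; exact hp.2
      · intro _
        constructor
        · rw [SimpleGraph.Walk.support_cons, List.mem_cons]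
          exact Or.inr (h2 ▸ p.start_mem_support)
        · rw [SimpleGraph.Walk.support_cons, List.mem_cons]; exact Or.inl h1.symm
      · intro hab'
        exfalso
        rcases hab' with h' | h'
        · exact h' (by rw [SimpleGraph.Walk.support_cons, List.mem_cons]
                       exact Or.inr (h2 ▸ p.start_mem_support))
        · exact h' (by rw [SimpleGraph.Walk.support_cons, List.mem_cons]; exact Or.inl h1.symm)

lemma contains_of_star {G : SimpleGraph V} {x a b : V} (hxa : G.Adj x a) (hxb : G.Adj x b)
    (hab : a ≠ b) {r : ℕ} (hr : 2 ≤ r) :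
    ContainsKSubdivision (star G x a b) r → ContainsKSubdivision G r := by
  rintro ⟨v, hinj, P, hpath, hint, hdisj⟩
  have hax : a ≠ x := hxa.ne'
  have hbx : b ≠ x := hxb.ne'
  have hnotx : ∀ {s t : V} (_ : (star G x a b).Walk s t), s = x → t ≠ x → False := by
    intro s t W hs ht
    cases W with
    | nil => exact ht hs
    | cons h p => exact star_no_adj_x hax hbx (hs ▸ h)
  have hvx : ∀ k, v k ≠ x := by
    intro k hk
    have hex : ∃ j : Fin r, j ≠ k := by
      by_cases h0 : k = ⟨0, by omega⟩
      · exact ⟨⟨1, by omega⟩, by rw [h0]; intro hh; simp [Fin.ext_iff] at hh⟩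
      · exact ⟨⟨0, by omega⟩, fun hh => h0 hh.symm⟩
    obtain ⟨j, hj⟩ := hex
    have hvj : v j ≠ x := fun hh => hj (hinj (hh.trans hk.symm))
    rcases lt_or_gt_of_ne hj with hlt | hgt
    · exact hnotx (P j k hlt).reverse hk hvj
    · exact hnotx (P k j hgt) hk hvj
  have hxs : ∀ (i j : Fin r) (h : i < j), x ∉ (P i j h).support :=
    fun i j h => star_not_through_x hax hbx (P i j h) (hvx i)
  choose Q hQ1 hQ2 hQ3 hQ4 hQ5 using
    fun (i j : Fin r) (h : i < j) => lift_walk hxa hxb (P i j h) (hxs i j h)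
  refine ⟨v, hinj, Q, ?_, ?_, ?_⟩
  · intro i j h; exact hQ3 i j h (hpath i j h)
  · intro i j h y hy hyi hyj k
    rcases hQ2 i j h y hy with h' | rfl
    · exact hint i j h y h' hyi hyj k
    · exact fun hh => hvx k hh.symm
  · intro i j h i' j' h' hne y hy1 hy2
    rcases hQ2 i j h y hy1 with hy1' | rfl
    · rcases hQ2 i' j' h' y hy2 with hy2' | hy2x
      · exact hdisj i j h i' j' h' hne y hy1' hy2'
      · exact absurd (hy2x ▸ hy1') (hxs i j h)
    · exfalso
      have h4 := hQ4 i j h hy1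
      have h4' := hQ4 i' j' h' hy2
      have Ha := hdisj i j h i' j' h' hne a h4.1 h4'.1
      have Hb := hdisj i j h i' j' h' hne b h4.2 h4'.2
      have hlt : ¬ (i = j' ∧ j = i') := by
        rintro ⟨rfl, rfl⟩
        exact lt_irrefl _ (h.trans h')
      rcases Ha.1 with ha1 | ha1 <;> rcases Hb.1 with hb1 | hb1
      · exact hab (ha1.trans hb1.symm)
      · rcases Ha.2 with ha2 | ha2 <;> rcases Hb.2 with hb2 | hb2
        · exact hab (ha2.trans hb2.symm)
        · exact hne (by rw [hinj (ha1.symm.trans ha2), hinj (hb1.symm.trans hb2)])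
        · exact hlt ⟨hinj (ha1.symm.trans ha2), hinj (hb1.symm.trans hb2)⟩
        · exact hab (ha2.trans hb2.symm)
      · rcases Ha.2 with ha2 | ha2 <;> rcases Hb.2 with hb2 | hb2
        · exact hab (ha2.trans hb2.symm)
        · exact hlt ⟨hinj (hb1.symm.trans hb2), hinj (ha1.symm.trans ha2)⟩
        · exact hne (by rw [hinj (hb1.symm.trans hb2), hinj (ha1.symm.trans ha2)])
        · exact hab (ha2.trans hb2.symm)
      · exact hab (ha1.trans hb1.symm)

end Lift

@[simp] lemma delV_adj {G : SimpleGraph V} {x u w : V} :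
    (delV G x).Adj u w ↔ G.Adj u w ∧ u ≠ x ∧ w ≠ x := Iff.rfl

@[simp] lemma star_adj {G : SimpleGraph V} {x a b u w : V} :
    (star G x a b).Adj u w ↔
      (G.Adj u w ∧ u ≠ x ∧ w ≠ x) ∨ (a ≠ b ∧ u = a ∧ w = b) ∨ (a ≠ b ∧ u = b ∧ w = a) :=
  Iff.rfl

lemma star_le_of_adj {G : SimpleGraph V} {x a b : V} (h : G.Adj a b) : star G x a b ≤ G := by
  rintro u w (⟨h1, _, _⟩ | ⟨_, rfl, rfl⟩ | ⟨_, rfl, rfl⟩)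
  · exact h1
  · exact h
  · exact h.symm

section Degrees

variable [Fintype V] {G : SimpleGraph V} {x a b v : V}

lemma delV_neighborFinset (hv : v ≠ x) :
    (delV G x).neighborFinset v = (G.neighborFinset v).erase x := by
  ext w
  simp only [SimpleGraph.mem_neighborFinset, delV_adj, Finset.mem_erase]
  constructor
  · rintro ⟨h1, _, h3⟩; exact ⟨h3, h1⟩
  · rintro ⟨h1, h2⟩; exact ⟨h2, hv, h1⟩

lemma delV_degree_x : (delV G x).degree x = 0 := by
  have : (delV G x).neighborFinset x = ∅ := by
    ext w
    simp only [SimpleGraph.mem_neighborFinset, delV_adj, Finset.notMem_empty, iff_false]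
    rintro ⟨_, h2, _⟩; exact h2 rfl
  simp [SimpleGraph.degree, this]

lemma delV_degree_ne (hv : v ≠ x) (hnadj : ¬ G.Adj v x) :
    (delV G x).degree v = G.degree v := by
  simp only [SimpleGraph.degree, delV_neighborFinset hv]
  rw [Finset.erase_eq_of_notMem (by simpa [SimpleGraph.mem_neighborFinset] using hnadj)]

lemma delV_degree_adj (hv : v ≠ x) (hadj : G.Adj v x) :
    (delV G x).degree v + 1 = G.degree v := by
  simp only [SimpleGraph.degree, delV_neighborFinset hv]
  rw [Finset.card_erase_of_mem (by simpa [SimpleGraph.mem_neighborFinset] using hadj)]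
  have : 0 < (G.neighborFinset v).card :=
    Finset.card_pos.mpr ⟨x, by simpa [SimpleGraph.mem_neighborFinset] using hadj⟩
  omega

lemma delV_degree_le (u : V) : (delV G x).degree u ≤ G.degree u := by
  apply Finset.card_le_card
  intro w hw
  rw [SimpleGraph.mem_neighborFinset] at hw ⊢
  exact hw.1

section StarDeg
variable (hxa : G.Adj x a) (hxb : G.Adj x b) (hab : a ≠ b) (hnab : ¬ G.Adj a b)
include hxa hxb hab hnab

lemma star_degree_a : (star G x a b).degree a = G.degree a := by
  have hnf : (star G x a b).neighborFinset a = insert b ((G.neighborFinset a).erase x) := by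
    ext w
    simp only [SimpleGraph.mem_neighborFinset, star_adj, Finset.mem_insert, Finset.mem_erase]
    constructor
    · rintro (⟨h1, _, h3⟩ | ⟨_, _, rfl⟩ | ⟨_, h2, _⟩)
      · exact Or.inr ⟨h3, h1⟩
      · exact Or.inl rfl
      · exact absurd h2 hab
    · rintro (rfl | ⟨h1, h2⟩)
      · refine Or.inr (Or.inl ?_); simp [hab]
      · exact Or.inl ⟨h2, hxa.ne', h1⟩
  have hbe : b ∉ (G.neighborFinset a).erase x := by
    simp only [Finset.mem_erase, SimpleGraph.mem_neighborFinset]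
    rintro ⟨_, h2⟩; exact hnab h2
  have hxm : x ∈ G.neighborFinset a := by
    simp only [SimpleGraph.mem_neighborFinset]; exact hxa.symm
  simp only [SimpleGraph.degree, hnf, Finset.card_insert_of_notMem hbe,
    Finset.card_erase_of_mem hxm]
  have : 0 < (G.neighborFinset a).card := Finset.card_pos.mpr ⟨x, hxm⟩
  omega

end StarDeg

lemma star_comm (G : SimpleGraph V) (x a b : V) : star G x a b = star G x b a := by
  ext u w
  simp only [star_adj]
  constructor
  · rintro (h | ⟨h1, h2, h3⟩ | ⟨h1, h2, h3⟩)
    · exact Or.inl h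
    · exact Or.inr (Or.inr ⟨h1.symm, h2, h3⟩)
    · exact Or.inr (Or.inl ⟨h1.symm, h2, h3⟩)
  · rintro (h | ⟨h1, h2, h3⟩ | ⟨h1, h2, h3⟩)
    · exact Or.inl h
    · exact Or.inr (Or.inr ⟨h1.symm, h2, h3⟩)
    · exact Or.inr (Or.inl ⟨h1.symm, h2, h3⟩)

lemma star_degree_b (hxa : G.Adj x a) (hxb : G.Adj x b) (hab : a ≠ b) (hnab : ¬ G.Adj a b) :
    (star G x a b).degree b = G.degree b := by
  rw [star_comm]
  exact star_degree_a hxb hxa hab.symm (fun h => hnab h.symm)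

lemma star_degree_x (hax : a ≠ x) (hbx : b ≠ x) : (star G x a b).degree x = 0 := by
  have : (star G x a b).neighborFinset x = ∅ := by
    ext w
    simp only [SimpleGraph.mem_neighborFinset, Finset.notMem_empty, iff_false]
    exact star_no_adj_x hax hbx
  simp [SimpleGraph.degree, this]

lemma star_neighborFinset_other (hvx : v ≠ x) (hva : v ≠ a) (hvb : v ≠ b) :
    (star G x a b).neighborFinset v = (G.neighborFinset v).erase x := by
  ext w
  simp only [SimpleGraph.mem_neighborFinset, star_adj, Finset.mem_erase]
  constructor
  · rintro (⟨h1, _, h3⟩ | ⟨_, h2, _⟩ | ⟨_, h2, _⟩)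
    · exact ⟨h3, h1⟩
    · exact absurd h2 hva
    · exact absurd h2 hvb
  · rintro ⟨h1, h2⟩; exact Or.inl ⟨h2, hvx, h1⟩

lemma star_degree_other_ne (hvx : v ≠ x) (hva : v ≠ a) (hvb : v ≠ b) (hnadj : ¬ G.Adj v x) :
    (star G x a b).degree v = G.degree v := by
  simp only [SimpleGraph.degree, star_neighborFinset_other hvx hva hvb]
  rw [Finset.erase_eq_of_notMem (by simpa [SimpleGraph.mem_neighborFinset] using hnadj)]

lemma star_degree_other_adj (hvx : v ≠ x) (hva : v ≠ a) (hvb : v ≠ b) (hadj : G.Adj v x) :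
    (star G x a b).degree v + 1 = G.degree v := by
  simp only [SimpleGraph.degree, star_neighborFinset_other hvx hva hvb]
  rw [Finset.card_erase_of_mem (by simpa [SimpleGraph.mem_neighborFinset] using hadj)]
  have : 0 < (G.neighborFinset v).card :=
    Finset.card_pos.mpr ⟨x, by simpa [SimpleGraph.mem_neighborFinset] using hadj⟩
  omega

lemma adj_degree_pos (h : G.Adj v x) : 0 < G.degree v :=
  (SimpleGraph.degree_pos_iff_exists_adj G v).mpr ⟨x, h⟩

lemma edge_pos_of_degree (h : 0 < G.degree v) : 0 < G.edgeFinset.card := by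
  obtain ⟨u, hu⟩ := (SimpleGraph.degree_pos_iff_exists_adj G v).mp h
  exact Finset.card_pos.mpr ⟨s(v, u), SimpleGraph.mem_edgeFinset.mpr hu⟩

lemma delV_edge_lt (hx : 0 < G.degree x) :
    (delV G x).edgeFinset.card < G.edgeFinset.card := by
  obtain ⟨u, hu⟩ := (SimpleGraph.degree_pos_iff_exists_adj G x).mp hx
  apply Finset.card_lt_card
  rw [Finset.ssubset_iff_of_subset (SimpleGraph.edgeFinset_subset_edgeFinset.mpr (delV_le G x))]
  refine ⟨s(x, u), SimpleGraph.mem_edgeFinset.mpr hu, ?_⟩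
  rw [SimpleGraph.mem_edgeFinset]
  rintro (⟨_, h2, _⟩ : (delV G x).Adj x u)
  exact h2 rfl

lemma star_edge_lt (hdeg : 2 ≤ G.degree x) :
    (star G x a b).edgeFinset.card < G.edgeFinset.card := by
  have hsub : G.incidenceFinset x ⊆ G.edgeFinset := by
    intro e he
    rw [SimpleGraph.mem_incidenceFinset] at he
    exact SimpleGraph.mem_edgeFinset.mpr he.1
  have hmain : (star G x a b).edgeFinset ⊆
      insert s(a, b) (G.edgeFinset \ G.incidenceFinset x) := by
    intro e he
    rw [SimpleGraph.mem_edgeFinset] at he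
    induction e with
    | h u w =>
      rcases he with ⟨h1, h2, h3⟩ | ⟨_, rfl, rfl⟩ | ⟨_, rfl, rfl⟩
      · refine Finset.mem_insert_of_mem ?_
        rw [Finset.mem_sdiff, SimpleGraph.mem_edgeFinset, SimpleGraph.mem_incidenceFinset]
        refine ⟨h1, ?_⟩
        rintro ⟨_, hmem⟩
        rw [Sym2.mem_iff] at hmem
        rcases hmem with rfl | rfl
        · exact h2 rfl
        · exact h3 rfl
      · exact Finset.mem_insert_self _ _
      · rw [Sym2.eq_swap]; exact Finset.mem_insert_self _ _
  have h1 := Finset.card_le_card hmain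
  have h2 := Finset.card_insert_le s(a, b) (G.edgeFinset \ G.incidenceFinset x)
  have h3 := Finset.card_sdiff_of_subset hsub
  have h4 := Finset.card_le_card hsub
  rw [SimpleGraph.card_incidenceFinset_eq_degree] at h3 h4
  omega

end Degrees

section Main

variable [Fintype V] {G : SimpleGraph V}

lemma exists_third (S : Finset V) (c d : V) (h : 3 ≤ S.card) :
    ∃ z ∈ S, z ≠ c ∧ z ≠ d := by
  by_contra h'
  push_neg at h'
  have hsub : S ⊆ {c, d} := by
    intro z hz
    rcases eq_or_ne z c with rfl | hzc
    · exact Finset.mem_insert_self _ _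
    · rw [h' z hz hzc]; exact Finset.mem_insert_of_mem (Finset.mem_singleton_self _)
  have h2 := Finset.card_le_card hsub
  have h3 := Finset.card_insert_le c ({d} : Finset V)
  simp only [Finset.card_singleton] at h3
  omega

lemma contains_K4 {x a b c : V} (hxa : G.Adj x a) (hxb : G.Adj x b) (hxc : G.Adj x c)
    (hab : G.Adj a b) (hac : G.Adj a c) (hbc : G.Adj b c) :
    ContainsKSubdivision G 4 := by
  have n1 : x ≠ a := hxa.ne
  have n2 : x ≠ b := hxb.ne
  have n3 : x ≠ c := hxc.ne
  have n4 : a ≠ b := hab.ne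
  have n5 : a ≠ c := hac.ne
  have n6 : b ≠ c := hbc.ne
  apply contains_of_complete ![x, a, b, c]
  · intro i j hij
    fin_cases i <;> fin_cases j <;>
      simp_all [n1, n2, n3, n4, n5, n6, n1.symm, n2.symm, n3.symm, n4.symm, n5.symm, n6.symm]
  · intro i j hij
    fin_cases i <;> fin_cases j <;>
      simp_all [hxa, hxb, hxc, hab, hac, hbc,
        hxa.symm, hxb.symm, hxc.symm, hab.symm, hac.symm, hbc.symm]

lemma contains_K3 {x a b : V} (hxa : G.Adj x a) (hxb : G.Adj x b) (hab : G.Adj a b) :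
    ContainsKSubdivision G 3 := by
  have n1 : x ≠ a := hxa.ne
  have n2 : x ≠ b := hxb.ne
  have n4 : a ≠ b := hab.ne
  apply contains_of_complete ![x, a, b]
  · intro i j hij
    fin_cases i <;> fin_cases j <;>
      simp_all [n1, n2, n4, n1.symm, n2.symm, n4.symm]
  · intro i j hij
    fin_cases i <;> fin_cases j <;>
      simp_all [hxa, hxb, hab, hxa.symm, hxb.symm, hab.symm]

lemma nbr_card (v : V) : (G.neighborFinset v).card = G.degree v := rfl

set_option maxHeartbeats 2000000 in
private lemma main4 (m : ℕ) : ∀ (G : SimpleGraph V),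
    G.edgeFinset.card ≤ m →
    (∀ u w, 0 < G.degree u → G.degree u ≤ 2 → 0 < G.degree w → G.degree w ≤ 2 → u ≠ w →
      G.Adj u w) →
    (∀ u w t, (0 < G.degree u ∧ G.degree u ≤ 2) → (0 < G.degree w ∧ G.degree w ≤ 2) →
      (0 < G.degree t ∧ G.degree t ≤ 2) → u = w ∨ u = t ∨ w = t) →
    (∃ v, 3 ≤ G.degree v) →
    ContainsKSubdivision G 4 := by
  induction m with
  | zero =>
    rintro G hcard _ _ ⟨v, hv⟩
    exfalso
    have := edge_pos_of_degree (show 0 < G.degree v by omega)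
    omega
  | succ m IH =>
    rintro G hcard hadj h3 ⟨v₀, hv₀⟩
    by_cases hex : ∃ u, 0 < G.degree u ∧ G.degree u ≤ 2
    · obtain ⟨u, hu1, hu2⟩ := hex
      by_cases hex2 : ∃ w, w ≠ u ∧ 0 < G.degree w ∧ G.degree w ≤ 2
      · obtain ⟨w, hwu, hw1, hw2⟩ := hex2
        have hadjuw : G.Adj u w := hadj u w hu1 hu2 hw1 hw2 hwu.symm
        have hAll : ∀ z, 0 < G.degree z → G.degree z ≤ 2 → z = u ∨ z = w := by
          intro z hz1 hz2
          rcases h3 u w z ⟨hu1, hu2⟩ ⟨hw1, hw2⟩ ⟨hz1, hz2⟩ with h | h | h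
          · exact absurd h hwu.symm
          · exact Or.inl h.symm
          · exact Or.inr h.symm
        have process1 : ∀ A B : V, A ≠ B → G.Adj A B → G.degree A = 1 →
            G.degree B ≤ 2 → (∀ z, 0 < G.degree z → G.degree z ≤ 2 → z = A ∨ z = B) →
            ContainsKSubdivision G 4 := by
          intro A B hAB hadjAB hdA hdB hAllAB
          have hnfA : G.neighborFinset A = {B} := by
            obtain ⟨y, hy⟩ := Finset.card_eq_one.mp (show (G.neighborFinset A).card = 1 from hdA)
            have hBm : B ∈ G.neighborFinset A := (G.mem_neighborFinset A B).mpr hadjAB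
            rw [hy] at hBm ⊢
            rw [Finset.mem_singleton] at hBm
            rw [hBm]
          have hnadjA : ∀ z, z ≠ B → ¬ G.Adj z A := by
            intro z hz hc
            have : z ∈ G.neighborFinset A := (G.mem_neighborFinset A z).mpr hc.symm
            rw [hnfA, Finset.mem_singleton] at this
            exact hz this
          have hdegB : 0 < G.degree B := adj_degree_pos hadjAB.symm
          have hlowOnly : ∀ z, 0 < (delV G A).degree z → (delV G A).degree z ≤ 2 → z = B := by
            intro z hz1 hz2
            rcases eq_or_ne z A with rfl | hzA
            · rw [delV_degree_x] at hz1; omega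
            rcases eq_or_ne z B with rfl | hzB
            · rfl
            exfalso
            rw [delV_degree_ne hzA (hnadjA z hzB)] at hz1 hz2
            rcases hAllAB z hz1 hz2 with rfl | rfl
            · exact hzA rfl
            · exact hzB rfl
          apply contains_mono (delV_le G A)
          apply IH
          · have := delV_edge_lt (G := G) (x := A) (by omega)
            omega
          · intro z1 z2 ha1 ha2 hb1 hb2 hne
            exact absurd ((hlowOnly z1 ha1 ha2).trans (hlowOnly z2 hb1 hb2).symm) hne
          · intro z1 z2 z3 hz1 hz2 _
            exact Or.inl ((hlowOnly z1 hz1.1 hz1.2).trans (hlowOnly z2 hz2.1 hz2.2).symm)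
          · refine ⟨v₀, ?_⟩
            have hvA : v₀ ≠ A := by intro h; rw [h] at hv₀; omega
            have hvB : v₀ ≠ B := by intro h; rw [h] at hv₀; omega
            rw [delV_degree_ne hvA (hnadjA v₀ hvB)]
            exact hv₀
        have process2 : ∀ A B : V, A ≠ B → G.Adj A B → G.degree A = 2 →
            G.degree B = 2 → (∀ z, 0 < G.degree z → G.degree z ≤ 2 → z = A ∨ z = B) →
            ContainsKSubdivision G 4 := by
          intro A B hAB hadjAB hdA hdB hAllAB
          obtain ⟨s, t, hst, hnfA⟩ := Finset.card_eq_two.mp (show (G.neighborFinset A).card = 2 from hdA)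
          have hBm : B ∈ G.neighborFinset A := (G.mem_neighborFinset A B).mpr hadjAB
          have hy : ∃ y, y ≠ B ∧ G.neighborFinset A = {B, y} := by
            rw [hnfA] at hBm
            rw [Finset.mem_insert, Finset.mem_singleton] at hBm
            rcases hBm with rfl | rfl
            · exact ⟨t, hst.symm, by rw [hnfA]⟩
            · refine ⟨s, hst, by rw [hnfA]; ext z; simp [Finset.mem_insert]; tauto⟩
          obtain ⟨y, hyB, hnfA'⟩ := hy
          have hyA : G.Adj A y := by
            rw [← G.mem_neighborFinset, hnfA']
            exact Finset.mem_insert_of_mem (Finset.mem_singleton_self _)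
          have hyAne : y ≠ A := hyA.ne'
          have hyhigh : 3 ≤ G.degree y := by
            have hpos : 0 < G.degree y := adj_degree_pos hyA.symm
            by_contra hc
            rcases hAllAB y hpos (by omega) with rfl | rfl
            · exact hyAne rfl
            · exact hyB rfl
          have hnadjA : ∀ z, z ≠ B → z ≠ y → ¬ G.Adj z A := by
            intro z hz1 hz2 hc
            have : z ∈ G.neighborFinset A := (G.mem_neighborFinset A z).mpr hc.symm
            rw [hnfA', Finset.mem_insert, Finset.mem_singleton] at this
            tauto
          obtain ⟨w', hw'mem, hw'A, hw'B⟩ := exists_third (G.neighborFinset y) A B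
            (show 3 ≤ (G.neighborFinset y).card from hyhigh)
          have hw'y : w' ≠ y := by
            intro h
            rw [h] at hw'mem
            exact (G.notMem_neighborFinset_self y) hw'mem
          have hw'high : 3 ≤ G.degree w' := by
            have hpos : 0 < G.degree w' :=
              adj_degree_pos ((G.mem_neighborFinset y w').mp hw'mem).symm
            by_contra hc
            rcases hAllAB w' hpos (by omega) with rfl | rfl
            · exact hw'A rfl
            · exact hw'B rfl
          by_cases hyadjB : G.Adj y B
          · -- delete A
            have hlowOnly : ∀ z, 0 < (delV G A).degree z → (delV G A).degree z ≤ 2 →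
                z = B ∨ z = y := by
              intro z hz1 hz2
              rcases eq_or_ne z A with rfl | hzA
              · rw [delV_degree_x] at hz1; omega
              rcases eq_or_ne z B with rfl | hzB
              · exact Or.inl rfl
              rcases eq_or_ne z y with rfl | hzy
              · exact Or.inr rfl
              exfalso
              rw [delV_degree_ne hzA (hnadjA z hzB hzy)] at hz1 hz2
              rcases hAllAB z hz1 hz2 with rfl | rfl
              · exact hzA rfl
              · exact hzB rfl
            apply contains_mono (delV_le G A)
            apply IH
            · have := delV_edge_lt (G := G) (x := A) (by omega)
              omega
            · intro z1 z2 ha1 ha2 hb1 hb2 hne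
              rcases hlowOnly z1 ha1 ha2 with rfl | rfl <;>
                rcases hlowOnly z2 hb1 hb2 with rfl | rfl
              · exact absurd rfl hne
              · exact ⟨hyadjB.symm, hAB.symm, hyAne⟩
              · exact ⟨hyadjB, hyAne, hAB.symm⟩
              · exact absurd rfl hne
            · intro z1 z2 z3 hz1 hz2 hz3
              rcases hlowOnly z1 hz1.1 hz1.2 with rfl | rfl <;>
                rcases hlowOnly z2 hz2.1 hz2.2 with rfl | rfl <;>
                rcases hlowOnly z3 hz3.1 hz3.2 with rfl | rfl <;> tauto
            · refine ⟨w', ?_⟩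
              have hw'ne : w' ≠ A := hw'A
              rw [delV_degree_ne hw'ne (hnadjA w' hw'B hw'y)]
              exact hw'high
          · -- star A y B
            apply contains_of_star hyA hadjAB hyB (by norm_num)
            have hdegstar : ∀ z, 0 < (star G A y B).degree z →
                (star G A y B).degree z ≤ 2 → z = B := by
              intro z hz1 hz2
              rcases eq_or_ne z A with rfl | hzA
              · rw [star_degree_x hyAne hAB.symm] at hz1; omega
              rcases eq_or_ne z y with rfl | hzy
              · rw [star_degree_a hyA hadjAB hyB hyadjB] at hz1 hz2; omega
              rcases eq_or_ne z B with rfl | hzB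
              · rfl
              exfalso
              rw [star_degree_other_ne hzA hzy hzB (hnadjA z hzB hzy)] at hz1 hz2
              rcases hAllAB z hz1 hz2 with rfl | rfl
              · exact hzA rfl
              · exact hzB rfl
            apply IH
            · have := star_edge_lt (G := G) (x := A) (a := y) (b := B) (by omega)
              omega
            · intro z1 z2 ha1 ha2 hb1 hb2 hne
              exact absurd ((hdegstar z1 ha1 ha2).trans (hdegstar z2 hb1 hb2).symm) hne
            · intro z1 z2 z3 hz1 hz2 _
              exact Or.inl ((hdegstar z1 hz1.1 hz1.2).trans (hdegstar z2 hz2.1 hz2.2).symm)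
            · refine ⟨y, ?_⟩
              rw [star_degree_a hyA hadjAB hyB hyadjB]
              exact hyhigh
        rcases (by omega : G.degree u = 1 ∨ G.degree u = 2) with hdu | hdu
        · exact process1 u w hwu.symm hadjuw hdu hw2 hAll
        · rcases (by omega : G.degree w = 1 ∨ G.degree w = 2) with hdw | hdw
          · exact process1 w u hwu hadjuw.symm hdw hu2
              (fun z h1 h2 => (hAll z h1 h2).symm)
          · exact process2 u w hwu.symm hadjuw hdu hdw hAll
      · -- unique low vertex u
        push_neg at hex2
        have hsingle : ∀ z, 0 < G.degree z → G.degree z ≤ 2 → z = u := by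
          intro z h1 h2
          by_contra hc
          have := hex2 z hc h1
          omega
        rcases (by omega : G.degree u = 1 ∨ G.degree u = 2) with hdu | hdu
        · -- degree 1 : delete u
          obtain ⟨y, hy⟩ := Finset.card_eq_one.mp
            (show (G.neighborFinset u).card = 1 from hdu)
          have hyadj : G.Adj u y := by
            rw [← G.mem_neighborFinset, hy]; exact Finset.mem_singleton_self _
          have hyu : y ≠ u := hyadj.ne'
          have hnadju : ∀ z, z ≠ y → ¬ G.Adj z u := by
            intro z hz hc
            have : z ∈ G.neighborFinset u := (G.mem_neighborFinset u z).mpr hc.symm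
            rw [hy, Finset.mem_singleton] at this; exact hz this
          have hyhigh : 3 ≤ G.degree y := by
            have hpos : 0 < G.degree y := adj_degree_pos hyadj.symm
            by_contra hc
            exact hyu (hsingle y hpos (by omega))
          obtain ⟨w', hw'mem, hw'u, hw'y⟩ := exists_third (G.neighborFinset y) u y
            (show 3 ≤ (G.neighborFinset y).card from hyhigh)
          have hw'adj : G.Adj y w' := (G.mem_neighborFinset y w').mp hw'mem
          have hw'high : 3 ≤ G.degree w' := by
            have hpos : 0 < G.degree w' := adj_degree_pos hw'adj.symm
            by_contra hc
            exact hw'u (hsingle w' hpos (by omega))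
          have hlowOnly : ∀ z, 0 < (delV G u).degree z → (delV G u).degree z ≤ 2 → z = y := by
            intro z h1 h2
            rcases eq_or_ne z u with rfl | hzu
            · rw [delV_degree_x] at h1; omega
            rcases eq_or_ne z y with rfl | hzy
            · rfl
            exfalso
            rw [delV_degree_ne hzu (hnadju z hzy)] at h1 h2
            exact hzu (hsingle z h1 h2)
          apply contains_mono (delV_le G u)
          apply IH
          · have := delV_edge_lt (G := G) (x := u) (by omega); omega
          · intro z1 z2 a1 a2 b1 b2 hne
            exact absurd ((hlowOnly z1 a1 a2).trans (hlowOnly z2 b1 b2).symm) hne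
          · intro z1 z2 z3 hz1 hz2 _
            exact Or.inl ((hlowOnly z1 hz1.1 hz1.2).trans (hlowOnly z2 hz2.1 hz2.2).symm)
          · refine ⟨w', ?_⟩
            rw [delV_degree_ne hw'u (hnadju w' hw'y)]
            exact hw'high
        · -- degree 2
          obtain ⟨y, z, hyz, hnfu⟩ := Finset.card_eq_two.mp
            (show (G.neighborFinset u).card = 2 from hdu)
          have hadjy : G.Adj u y := by rw [← G.mem_neighborFinset, hnfu]; simp
          have hadjz : G.Adj u z := by rw [← G.mem_neighborFinset, hnfu]; simp
          have hyu : y ≠ u := hadjy.ne'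
          have hzu : z ≠ u := hadjz.ne'
          have hyhigh : 3 ≤ G.degree y := by
            have hpos : 0 < G.degree y := adj_degree_pos hadjy.symm
            by_contra hc
            exact hyu (hsingle y hpos (by omega))
          have hzhigh : 3 ≤ G.degree z := by
            have hpos : 0 < G.degree z := adj_degree_pos hadjz.symm
            by_contra hc
            exact hzu (hsingle z hpos (by omega))
          have hnadju : ∀ t, t ≠ y → t ≠ z → ¬ G.Adj t u := by
            intro t h1 h2 hc
            have : t ∈ G.neighborFinset u := (G.mem_neighborFinset u t).mpr hc.symm
            rw [hnfu, Finset.mem_insert, Finset.mem_singleton] at this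
            tauto
          by_cases hyzadj : G.Adj y z
          · -- delete u
            obtain ⟨w', hw'mem, hw'u, hw'z⟩ := exists_third (G.neighborFinset y) u z
              (show 3 ≤ (G.neighborFinset y).card from hyhigh)
            have hw'y : w' ≠ y := by
              intro h; rw [h] at hw'mem
              exact (G.notMem_neighborFinset_self y) hw'mem
            have hw'adj : G.Adj y w' := (G.mem_neighborFinset y w').mp hw'mem
            have hw'high : 3 ≤ G.degree w' := by
              have hpos : 0 < G.degree w' := adj_degree_pos hw'adj.symm
              by_contra hc
              exact hw'u (hsingle w' hpos (by omega))
            have hlowOnly : ∀ t, 0 < (delV G u).degree t → (delV G u).degree t ≤ 2 →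
                t = y ∨ t = z := by
              intro t h1 h2
              rcases eq_or_ne t u with rfl | htu
              · rw [delV_degree_x] at h1; omega
              rcases eq_or_ne t y with rfl | hty
              · exact Or.inl rfl
              rcases eq_or_ne t z with rfl | htz
              · exact Or.inr rfl
              exfalso
              rw [delV_degree_ne htu (hnadju t hty htz)] at h1 h2
              exact htu (hsingle t h1 h2)
            apply contains_mono (delV_le G u)
            apply IH
            · have := delV_edge_lt (G := G) (x := u) (by omega); omega
            · intro z1 z2 a1 a2 b1 b2 hne
              rcases hlowOnly z1 a1 a2 with rfl | rfl <;>
                rcases hlowOnly z2 b1 b2 with rfl | rfl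
              · exact absurd rfl hne
              · exact ⟨hyzadj, hyu, hzu⟩
              · exact ⟨hyzadj.symm, hzu, hyu⟩
              · exact absurd rfl hne
            · intro z1 z2 z3 hz1 hz2 hz3
              rcases hlowOnly z1 hz1.1 hz1.2 with rfl | rfl <;>
                rcases hlowOnly z2 hz2.1 hz2.2 with rfl | rfl <;>
                rcases hlowOnly z3 hz3.1 hz3.2 with rfl | rfl <;> tauto
            · refine ⟨w', ?_⟩
              rw [delV_degree_ne hw'u (hnadju w' hw'y hw'z)]
              exact hw'high
          · -- star u y z
            apply contains_of_star hadjy hadjz hyz (by norm_num)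
            have hlowOnly : ∀ t, 0 < (star G u y z).degree t →
                (star G u y z).degree t ≤ 2 → False := by
              intro t h1 h2
              rcases eq_or_ne t u with rfl | htu
              · rw [star_degree_x hyu hzu] at h1; omega
              rcases eq_or_ne t y with rfl | hty
              · rw [star_degree_a hadjy hadjz hyz hyzadj] at h1 h2; omega
              rcases eq_or_ne t z with rfl | htz
              · rw [star_degree_b hadjy hadjz hyz hyzadj] at h1 h2; omega
              rw [star_degree_other_ne htu hty htz (hnadju t hty htz)] at h1 h2
              exact htu (hsingle t h1 h2)
            apply IH
            · have := star_edge_lt (G := G) (x := u) (a := y) (b := z) (by omega); omega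
            · intro z1 z2 a1 a2 b1 b2 hne
              exact (hlowOnly z1 a1 a2).elim
            · intro z1 z2 z3 hz1 hz2 _
              exact (hlowOnly z1 hz1.1 hz1.2).elim
            · refine ⟨y, ?_⟩
              rw [star_degree_a hadjy hadjz hyz hyzadj]
              exact hyhigh
    · -- no low vertices
      push_neg at hex
      have hlow' : ∀ u1, 0 < G.degree u1 → 3 ≤ G.degree u1 := fun u1 h => by
        have := hex u1 h; omega
      have hSne : (Finset.univ.filter (fun u1 => 0 < G.degree u1)).Nonempty :=
        ⟨v₀, by simp; omega⟩
      obtain ⟨x, hxS, hxmin⟩ :=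
        Finset.exists_min_image (α := ℕ) (Finset.univ.filter (fun u1 => 0 < G.degree u1)) (fun u1 => G.degree u1) hSne
      have hxpos : 0 < G.degree x := by simpa using hxS
      have hx3 : 3 ≤ G.degree x := hlow' x hxpos
      have hxmin' : ∀ t, 0 < G.degree t → G.degree x ≤ G.degree t := fun t ht =>
        hxmin t (by simp [ht])
      by_cases hx4 : G.degree x = 3
      · obtain ⟨a, b, c, hab, hac, hbc, hnbrs⟩ := Finset.card_eq_three.mp
          (show (G.neighborFinset x).card = 3 from hx4)
        have hxa : G.Adj x a := by rw [← G.mem_neighborFinset, hnbrs]; simp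
        have hxb : G.Adj x b := by rw [← G.mem_neighborFinset, hnbrs]; simp
        have hxc : G.Adj x c := by rw [← G.mem_neighborFinset, hnbrs]; simp
        have starStep : ∀ p q t : V, G.neighborFinset x = {p, q, t} → p ≠ q → p ≠ t → q ≠ t →
            ¬ G.Adj p q → ContainsKSubdivision G 4 := by
          intro p q t hnf hpq hpt hqt hnadj
          have hxp : G.Adj x p := by rw [← G.mem_neighborFinset, hnf]; simp
          have hxq : G.Adj x q := by rw [← G.mem_neighborFinset, hnf]; simp
          have hnadjx : ∀ t', t' ≠ p → t' ≠ q → t' ≠ t → ¬ G.Adj t' x := by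
            intro t' h1 h2 h3' hc
            have : t' ∈ G.neighborFinset x := (G.mem_neighborFinset x t').mpr hc.symm
            rw [hnf, Finset.mem_insert, Finset.mem_insert, Finset.mem_singleton] at this
            tauto
          have hphigh : 3 ≤ G.degree p := hlow' p (adj_degree_pos hxp.symm)
          have hqhigh : 3 ≤ G.degree q := hlow' q (adj_degree_pos hxq.symm)
          apply contains_of_star hxp hxq hpq (by norm_num)
          have hlowOnly : ∀ t', 0 < (star G x p q).degree t' →
              (star G x p q).degree t' ≤ 2 → t' = t := by
            intro t' h1 h2
            rcases eq_or_ne t' x with rfl | hzx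
            · rw [star_degree_x hxp.ne' hxq.ne'] at h1; omega
            rcases eq_or_ne t' p with rfl | hzp
            · rw [star_degree_a hxp hxq hpq hnadj] at h1 h2; omega
            rcases eq_or_ne t' q with rfl | hzq
            · rw [star_degree_b hxp hxq hpq hnadj] at h1 h2; omega
            rcases eq_or_ne t' t with rfl | hzt
            · rfl
            exfalso
            rw [star_degree_other_ne hzx hzp hzq (hnadjx t' hzp hzq hzt)] at h1 h2
            have := hlow' t' h1; omega
          apply IH
          · have := star_edge_lt (G := G) (x := x) (a := p) (b := q) (by omega); omega
          · intro z1 z2 a1 a2 b1 b2 hne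
            exact absurd ((hlowOnly z1 a1 a2).trans (hlowOnly z2 b1 b2).symm) hne
          · intro z1 z2 z3 hz1 hz2 _
            exact Or.inl ((hlowOnly z1 hz1.1 hz1.2).trans (hlowOnly z2 hz2.1 hz2.2).symm)
          · exact ⟨p, by rw [star_degree_a hxp hxq hpq hnadj]; exact hphigh⟩
        by_cases h1 : G.Adj a b
        · by_cases h2' : G.Adj a c
          · by_cases h3' : G.Adj b c
            · exact contains_K4 hxa hxb hxc h1 h2' h3'
            · refine starStep b c a ?_ hbc hab.symm hac.symm h3'
              rw [hnbrs]; ext s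
              simp only [Finset.mem_insert, Finset.mem_singleton]; tauto
          · refine starStep a c b ?_ hac hab hbc.symm h2'
            rw [hnbrs]; ext s
            simp only [Finset.mem_insert, Finset.mem_singleton]; tauto
        · exact starStep a b c hnbrs hab hac hbc h1
      · -- minimum degree at least 4 : delete x
        have hnbrhigh : ∀ t, 0 < G.degree t → 4 ≤ G.degree t := fun t ht => by
          have := hxmin' t ht; omega
        have hlowOnly : ∀ t, 0 < (delV G x).degree t → (delV G x).degree t ≤ 2 → False := by
          intro t h1 h2
          rcases eq_or_ne t x with rfl | htx
          · rw [delV_degree_x] at h1; omega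
          have hle := delV_degree_le (G := G) (x := x) t
          have h4 := hnbrhigh t (by omega)
          by_cases hadjtx : G.Adj t x
          · have := delV_degree_adj htx hadjtx; omega
          · rw [delV_degree_ne htx hadjtx] at h2; omega
        apply contains_mono (delV_le G x)
        apply IH
        · have := delV_edge_lt (G := G) (x := x) (by omega); omega
        · intro z1 z2 a1 a2 b1 b2 hne
          exact (hlowOnly z1 a1 a2).elim
        · intro z1 z2 z3 hz1 hz2 _
          exact (hlowOnly z1 hz1.1 hz1.2).elim
        · obtain ⟨u', hu'⟩ := (SimpleGraph.degree_pos_iff_exists_adj G x).mp (by omega)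
          refine ⟨u', ?_⟩
          have h4 := hnbrhigh u' (adj_degree_pos hu'.symm)
          have := delV_degree_adj (G := G) hu'.ne' hu'.symm
          omega

lemma exists_second (S : Finset V) (c : V) (h : 2 ≤ S.card) :
    ∃ z ∈ S, z ≠ c := by
  by_contra h'
  push_neg at h'
  have hsub : S ⊆ {c} := fun z hz => Finset.mem_singleton.mpr (h' z hz)
  have h2 := Finset.card_le_card hsub
  simp only [Finset.card_singleton] at h2
  omega

set_option maxHeartbeats 1000000 in
private lemma main3 (m : ℕ) : ∀ (G : SimpleGraph V),
    G.edgeFinset.card ≤ m →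
    (∀ u w, G.degree u = 1 → G.degree w = 1 → u = w) →
    (∃ v, 2 ≤ G.degree v) →
    ContainsKSubdivision G 3 := by
  induction m with
  | zero =>
    rintro G hcard _ ⟨v, hv⟩
    exfalso
    have := edge_pos_of_degree (show 0 < G.degree v by omega)
    omega
  | succ m IH =>
    rintro G hcard huniq ⟨v₀, hv₀⟩
    by_cases hex : ∃ u, G.degree u = 1
    · obtain ⟨u, hdu⟩ := hex
      obtain ⟨y, hy⟩ := Finset.card_eq_one.mp
        (show (G.neighborFinset u).card = 1 from hdu)
      have hyadj : G.Adj u y := by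
        rw [← G.mem_neighborFinset, hy]; exact Finset.mem_singleton_self _
      have hyu : y ≠ u := hyadj.ne'
      have hnadju : ∀ z, z ≠ y → ¬ G.Adj z u := by
        intro z hz hc
        have : z ∈ G.neighborFinset u := (G.mem_neighborFinset u z).mpr hc.symm
        rw [hy, Finset.mem_singleton] at this; exact hz this
      have hyhigh : 2 ≤ G.degree y := by
        have hpos : 0 < G.degree y := adj_degree_pos hyadj.symm
        by_contra hc
        exact hyu (huniq y u (by omega) hdu)
      obtain ⟨w', hw'mem, hw'u⟩ := exists_second (G.neighborFinset y) u
        (show 2 ≤ (G.neighborFinset y).card from hyhigh)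
      have hw'adj : G.Adj y w' := (G.mem_neighborFinset y w').mp hw'mem
      have hw'y : w' ≠ y := hw'adj.ne'
      have hw'high : 2 ≤ G.degree w' := by
        have hpos : 0 < G.degree w' := adj_degree_pos hw'adj.symm
        by_contra hc
        exact hw'u (huniq w' u (by omega) hdu)
      apply contains_mono (delV_le G u)
      apply IH
      · have := delV_edge_lt (G := G) (x := u) (by omega); omega
      · intro z1 z2 h1 h2
        have key : ∀ z, (delV G u).degree z = 1 → z = y := by
          intro z hz
          rcases eq_or_ne z u with rfl | hzu
          · rw [delV_degree_x] at hz; omega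
          rcases eq_or_ne z y with rfl | hzy
          · rfl
          exfalso
          rw [delV_degree_ne hzu (hnadju z hzy)] at hz
          exact hzu (huniq z u hz hdu)
        exact (key z1 h1).trans (key z2 h2).symm
      · refine ⟨w', ?_⟩
        rw [delV_degree_ne hw'u (hnadju w' hw'y)]
        exact hw'high
    · push_neg at hex
      have hlow' : ∀ u, 0 < G.degree u → 2 ≤ G.degree u := by
        intro u h
        have := hex u
        omega
      have hSne : (Finset.univ.filter (fun u1 => 0 < G.degree u1)).Nonempty :=
        ⟨v₀, by simp; omega⟩
      obtain ⟨x, hxS, hxmin⟩ :=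
        Finset.exists_min_image (α := ℕ) (Finset.univ.filter (fun u1 => 0 < G.degree u1))
          (fun u1 => G.degree u1) hSne
      have hxpos : 0 < G.degree x := by simpa using hxS
      have hx2 : 2 ≤ G.degree x := hlow' x hxpos
      have hxmin' : ∀ t, 0 < G.degree t → G.degree x ≤ G.degree t := fun t ht =>
        hxmin t (by simp [ht])
      by_cases hx3 : G.degree x = 2
      · obtain ⟨a, b, hab, hnf⟩ := Finset.card_eq_two.mp
          (show (G.neighborFinset x).card = 2 from hx3)
        have hxa : G.Adj x a := by rw [← G.mem_neighborFinset, hnf]; simp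
        have hxb : G.Adj x b := by rw [← G.mem_neighborFinset, hnf]; simp
        have hnadjx : ∀ t, t ≠ a → t ≠ b → ¬ G.Adj t x := by
          intro t h1 h2 hc
          have : t ∈ G.neighborFinset x := (G.mem_neighborFinset x t).mpr hc.symm
          rw [hnf, Finset.mem_insert, Finset.mem_singleton] at this
          tauto
        have hahigh : 2 ≤ G.degree a := hlow' a (adj_degree_pos hxa.symm)
        have hbhigh : 2 ≤ G.degree b := hlow' b (adj_degree_pos hxb.symm)
        by_cases hGab : G.Adj a b
        · exact contains_K3 hxa hxb hGab
        · apply contains_of_star hxa hxb hab (by norm_num)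
          have hlowOnly : ∀ t, (star G x a b).degree t = 1 → False := by
            intro t ht
            rcases eq_or_ne t x with rfl | htx
            · rw [star_degree_x hxa.ne' hxb.ne'] at ht; omega
            rcases eq_or_ne t a with rfl | hta
            · rw [star_degree_a hxa hxb hab hGab] at ht; omega
            rcases eq_or_ne t b with rfl | htb
            · rw [star_degree_b hxa hxb hab hGab] at ht; omega
            rw [star_degree_other_ne htx hta htb (hnadjx t hta htb)] at ht
            exact hex t ht
          apply IH
          · have := star_edge_lt (G := G) (x := x) (a := a) (b := b) (by omega); omega
          · intro z1 z2 h1 h2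
            exact (hlowOnly z1 h1).elim
          · refine ⟨a, ?_⟩
            rw [star_degree_a hxa hxb hab hGab]
            exact hahigh
      · have hnbrhigh : ∀ t, 0 < G.degree t → 3 ≤ G.degree t := fun t ht => by
          have := hxmin' t ht; omega
        apply contains_mono (delV_le G x)
        apply IH
        · have := delV_edge_lt (G := G) (x := x) (by omega); omega
        · intro z1 z2 h1 h2
          exfalso
          rcases eq_or_ne z1 x with rfl | hz1x
          · rw [delV_degree_x] at h1; omega
          have hle := delV_degree_le (G := G) (x := x) z1
          have h4 := hnbrhigh z1 (by omega)
          by_cases hadjz : G.Adj z1 x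
          · have := delV_degree_adj hz1x hadjz; omega
          · rw [delV_degree_ne hz1x hadjz] at h1; omega
        · obtain ⟨u', hu'⟩ := (SimpleGraph.degree_pos_iff_exists_adj G x).mp (by omega)
          refine ⟨u', ?_⟩
          have h4 := hnbrhigh u' (adj_degree_pos hu'.symm)
          have := delV_degree_adj (G := G) hu'.ne' hu'.symm
          omega

lemma exists_low_of_not4 (G : SimpleGraph V) (hfree : ¬ ContainsKSubdivision G 4)
    {v w : V} (h : G.Adj v w) : ∃ u, 0 < G.degree u ∧ G.degree u ≤ 2 := by
  by_contra hc
  push_neg at hc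
  apply hfree
  apply main4 G.edgeFinset.card G le_rfl
  · intro u1 w1 h1 h2 _ _ _
    have := hc u1 h1; omega
  · intro u1 w1 t1 h1 _ _
    have := hc u1 h1.1; omega
  · refine ⟨v, ?_⟩
    have := hc v (adj_degree_pos h)
    omega

lemma exists_low_of_not3 (G : SimpleGraph V) (hfree : ¬ ContainsKSubdivision G 3)
    {v w : V} (h : G.Adj v w) : ∃ u, 0 < G.degree u ∧ G.degree u ≤ 1 := by
  by_contra hc
  push_neg at hc
  apply hfree
  apply main3 G.edgeFinset.card G le_rfl
  · intro u1 w1 h1 _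
    have hpos : 0 < G.degree u1 := by omega
    have := hc u1 hpos; omega
  · refine ⟨v, ?_⟩
    have := hc v (adj_degree_pos h)
    omega

lemma no_edges_of_not2 {G : SimpleGraph V} (hfree : ¬ ContainsKSubdivision G 2) :
    ∀ v w, ¬ G.Adj v w := by
  intro v w h
  apply hfree
  apply contains_of_complete ![v, w]
  · intro i j hij
    fin_cases i <;> fin_cases j <;> simp_all [h.ne, h.ne.symm]
  · intro i j hij
    fin_cases i <;> fin_cases j <;> simp_all [h, h.symm]

end Main

open scoped RealInnerProductSpace

variable {V : Type*} [Fintype V]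

noncomputable def stressMap (G : SimpleGraph V) (d : ℕ) (f : V → EuclideanSpace ℝ (Fin d)) :
    (G.edgeSet → ℝ) →ₗ[ℝ] (V → EuclideanSpace ℝ (Fin d)) where
  toFun w := fun v =>
    ∑ u : V, if h : G.Adj v u then w ⟨s(v, u), G.mem_edgeSet.mpr h⟩ • (f v - f u) else 0
  map_add' w₁ w₂ := by
    funext v
    simp only [Pi.add_apply]
    rw [← Finset.sum_add_distrib]
    refine Finset.sum_congr rfl fun u _ => ?_
    by_cases h : G.Adj v u
    · simp only [dif_pos h, Pi.add_apply, add_smul]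
    · simp only [dif_neg h, add_zero]
  map_smul' c w := by
    funext v
    simp only [RingHom.id_apply, Pi.smul_apply]
    rw [Finset.smul_sum]
    refine Finset.sum_congr rfl fun u _ => ?_
    by_cases h : G.Adj v u
    · simp only [dif_pos h, Pi.smul_apply, smul_smul, smul_eq_mul]
    · simp only [dif_neg h, smul_zero]

lemma isStress_iff (G : SimpleGraph V) (d : ℕ) (f : V → EuclideanSpace ℝ (Fin d))
    (w : G.edgeSet → ℝ) : IsStress G d f w ↔ ∀ v, stressMap G d f w v = 0 := Iff.rfl

noncomputable def gram (G : SimpleGraph V) (d : ℕ) (f : V → EuclideanSpace ℝ (Fin d)) :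
    Matrix G.edgeSet G.edgeSet ℝ :=
  Matrix.of fun e e' => ∑ v : V,
    ⟪stressMap G d f (Pi.single e 1) v, stressMap G d f (Pi.single e' 1) v⟫

lemma stressMap_eq_sum (G : SimpleGraph V) (d : ℕ) (f : V → EuclideanSpace ℝ (Fin d))
    (w : G.edgeSet → ℝ) :
    stressMap G d f w = ∑ e : G.edgeSet, w e • stressMap G d f (Pi.single e 1) := by
  have hw : w = ∑ e : G.edgeSet, w e • (Pi.single e 1 : G.edgeSet → ℝ) := by
    funext e'
    rw [Finset.sum_apply]
    simp only [Pi.smul_apply, Pi.single_apply, smul_eq_mul, mul_ite, mul_one, mul_zero]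
    rw [Finset.sum_ite_eq Finset.univ e' (fun e => w e)]
    simp
  conv_lhs => rw [hw]
  rw [map_sum]
  refine Finset.sum_congr rfl fun e _ => ?_
  rw [map_smul]

lemma stressMap_apply_eq_sum (G : SimpleGraph V) (d : ℕ) (f : V → EuclideanSpace ℝ (Fin d))
    (w : G.edgeSet → ℝ) (v : V) :
    stressMap G d f w v = ∑ e : G.edgeSet, w e • stressMap G d f (Pi.single e 1) v := by
  conv_lhs => rw [stressMap_eq_sum G d f w]
  rw [Finset.sum_apply]
  simp only [Pi.smul_apply]

lemma gram_mulVec (G : SimpleGraph V) (d : ℕ) (f : V → EuclideanSpace ℝ (Fin d))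
    (w : G.edgeSet → ℝ) (e : G.edgeSet) :
    (gram G d f).mulVec w e =
      ∑ v : V, ⟪stressMap G d f (Pi.single e 1) v, stressMap G d f w v⟫ := by
  simp only [Matrix.mulVec, dotProduct, gram, Matrix.of_apply]
  simp_rw [Finset.sum_mul]
  rw [Finset.sum_comm]
  refine Finset.sum_congr rfl fun v _ => ?_
  rw [stressMap_apply_eq_sum G d f w v, inner_sum]
  refine Finset.sum_congr rfl fun e' _ => ?_
  rw [real_inner_smul_right, mul_comm]

lemma gram_quad (G : SimpleGraph V) (d : ℕ) (f : V → EuclideanSpace ℝ (Fin d))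
    (w : G.edgeSet → ℝ) :
    ∑ e : G.edgeSet, w e * (gram G d f).mulVec w e =
      ∑ v : V, ⟪stressMap G d f w v, stressMap G d f w v⟫ := by
  simp_rw [gram_mulVec, Finset.mul_sum]
  rw [Finset.sum_comm]
  refine Finset.sum_congr rfl fun v _ => ?_
  simp_rw [← real_inner_smul_left]
  rw [← sum_inner, ← stressMap_apply_eq_sum G d f w v]

theorem isOpen_stressFree (G : SimpleGraph V) (d : ℕ) :
    IsOpen (StressFreeEmbeddings G d) := by
  have hset : StressFreeEmbeddings G d = (fun f => (gram G d f).det) ⁻¹' {x : ℝ | x ≠ 0} := by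
    ext f
    simp only [Set.mem_preimage, Set.mem_setOf_eq, StressFreeEmbeddings]
    constructor
    · intro hf hdet
      obtain ⟨w, hw0, hwv⟩ := Matrix.exists_mulVec_eq_zero_iff.mpr hdet
      refine hw0 (hf w ?_)
      rw [isStress_iff]
      intro v
      have hq : ∑ v : V, ⟪stressMap G d f w v, stressMap G d f w v⟫ = 0 := by
        rw [← gram_quad, hwv]
        simp
      have h0 := (Finset.sum_eq_zero_iff_of_nonneg
        (fun v _ => real_inner_self_nonneg)).mp hq v (Finset.mem_univ v)
      exact inner_self_eq_zero.mp h0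
    · intro hdet w hst
      have hz : ∀ v, stressMap G d f w v = 0 := (isStress_iff G d f w).mp hst
      have hmv : (gram G d f).mulVec w = 0 := by
        funext e
        rw [gram_mulVec]
        simp [hz]
      by_contra hw
      exact hdet (Matrix.exists_mulVec_eq_zero_iff.mp ⟨w, hw, hmv⟩)
  rw [hset]
  refine IsOpen.preimage ?_ isOpen_ne
  apply Continuous.matrix_det
  apply continuous_matrix
  intro e e'
  apply continuous_finset_sum
  intro v _
  simp only [stressMap, LinearMap.coe_mk, AddHom.coe_mk]
  apply Continuous.inner <;>
  · apply continuous_finset_sum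
    intro u _
    by_cases h : G.Adj v u
    · simp only [dif_pos h]
      fun_prop
    · simp only [dif_neg h]
      exact continuous_const


/-! ### density -/

lemma exists_small_ne_zero {E : Type*} [NormedAddCommGroup E] [NormedSpace ℝ E] [Nontrivial E]
    {ε : ℝ} (hε : 0 < ε) : ∃ c : E, c ≠ 0 ∧ ‖c‖ < ε := by
  obtain ⟨c0, hc0⟩ := exists_ne (0 : E)
  have hn : 0 < ‖c0‖ := norm_pos_iff.mpr hc0
  refine ⟨(ε / (2 * ‖c0‖)) • c0, smul_ne_zero (by positivity) hc0, ?_⟩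
  rw [norm_smul, Real.norm_eq_abs, abs_of_pos (by positivity)]
  have h1 : ε / (2 * ‖c0‖) * ‖c0‖ = ε / 2 := by field_simp
  rw [h1]
  linarith

lemma eu_nontrivial (d : ℕ) (hd : 0 < d) : Nontrivial (EuclideanSpace ℝ (Fin d)) := by
  refine ⟨⟨EuclideanSpace.single ⟨0, hd⟩ 1, 0, fun h => ?_⟩⟩
  have h1 : (EuclideanSpace.single (⟨0, hd⟩ : Fin d) (1 : ℝ)) ⟨0, hd⟩ = 0 := by rw [h]; rfl
  rw [EuclideanSpace.single_apply] at h1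
  simp at h1

variable [Fintype V]

lemma dense_injective (d : ℕ) (hd : 0 < d) :
    Dense {f : V → EuclideanSpace ℝ (Fin d) | Function.Injective f} := by
  haveI := eu_nontrivial d hd
  have h1 : ∀ p : V × V,
      IsOpen {f : V → EuclideanSpace ℝ (Fin d) | p.1 ≠ p.2 → f p.1 ≠ f p.2} ∧
      Dense {f : V → EuclideanSpace ℝ (Fin d) | p.1 ≠ p.2 → f p.1 ≠ f p.2} := by
    rintro ⟨aa, bb⟩
    by_cases hab : aa = bb
    · have hset : {f : V → EuclideanSpace ℝ (Fin d) | aa ≠ bb → f aa ≠ f bb} = Set.univ := by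
        ext f; simp [hab]
      rw [hset]
      exact ⟨isOpen_univ, dense_univ⟩
    · have hset : {f : V → EuclideanSpace ℝ (Fin d) | aa ≠ bb → f aa ≠ f bb} =
          {f : V → EuclideanSpace ℝ (Fin d) | f aa = f bb}ᶜ := by
        ext f; simp [hab]
      rw [hset]
      constructor
      · exact (isClosed_eq (continuous_apply aa) (continuous_apply bb)).isOpen_compl
      · rw [Metric.dense_iff]
        intro f r hr
        by_cases heq : f aa = f bb
        · obtain ⟨c, hc0, hcn⟩ := exists_small_ne_zero (E := EuclideanSpace ℝ (Fin d))
            (half_pos hr)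
          refine ⟨Function.update f aa (f aa + c), ?_, ?_⟩
          · rw [Metric.mem_ball, dist_pi_lt_iff hr]
            intro b
            rcases eq_or_ne b aa with rfl | hb
            · rw [Function.update_self]
              have : dist (f b + c) (f b) = ‖c‖ := by
                rw [dist_eq_norm]; simp
              rw [this]; linarith
            · rw [Function.update_of_ne hb]
              simp [hr]
          · simp only [Set.mem_compl_iff, Set.mem_setOf_eq]
            rw [Function.update_self, Function.update_of_ne (Ne.symm hab), ← heq]
            intro hcon
            exact hc0 (add_eq_left.mp hcon)
        · exact ⟨f, Metric.mem_ball_self hr, heq⟩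
  have hsub : (⋂ p : V × V, {f : V → EuclideanSpace ℝ (Fin d) | p.1 ≠ p.2 → f p.1 ≠ f p.2}) ⊆
      {f : V → EuclideanSpace ℝ (Fin d) | Function.Injective f} := by
    intro f hf a b hab
    by_contra hne
    exact (Set.mem_iInter.mp hf (a, b)) hne hab
  exact Dense.mono hsub (dense_iInter_of_isOpen (fun p => (h1 p).1) (fun p => (h1 p).2))

lemma indep2_coeffs {a b x : EuclideanSpace ℝ (Fin 2)}
    (h : (x - a) 0 * (x - b) 1 - (x - a) 1 * (x - b) 0 ≠ 0) {c1 c2 : ℝ}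
    (hsum : c1 • (x - a) + c2 • (x - b) = 0) : c1 = 0 ∧ c2 = 0 := by
  have h0 := congrFun (congrArg WithLp.ofLp hsum) (0 : Fin 2)
  have h1 := congrFun (congrArg WithLp.ofLp hsum) (1 : Fin 2)
  simp only [PiLp.add_apply, PiLp.smul_apply, PiLp.zero_apply, smul_eq_mul] at h0 h1
  constructor
  · have hc : c1 * ((x - a) 0 * (x - b) 1 - (x - a) 1 * (x - b) 0) = 0 := by
      linear_combination (x - b) 1 * h0 - (x - b) 0 * h1
    exact (mul_eq_zero.mp hc).resolve_right h
  · have hc : c2 * ((x - a) 0 * (x - b) 1 - (x - a) 1 * (x - b) 0) = 0 := by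
      linear_combination (x - a) 0 * h1 - (x - a) 1 * h0
    exact (mul_eq_zero.mp hc).resolve_right h

lemma dense_det_ne {a b : EuclideanSpace ℝ (Fin 2)} (hab : a ≠ b) :
    Dense {x : EuclideanSpace ℝ (Fin 2) |
      (x - a) 0 * (x - b) 1 - (x - a) 1 * (x - b) 0 ≠ 0} := by
  have hp : a - b ≠ 0 := sub_ne_zero.mpr hab
  set p : EuclideanSpace ℝ (Fin 2) := a - b with hpdef
  have hK : 0 < p 0 * p 0 + p 1 * p 1 := by
    rcases (show p 0 ≠ 0 ∨ p 1 ≠ 0 by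
      by_contra hcon
      push_neg at hcon
      apply hp
      have : ∀ i : Fin 2, p i = 0 := by
        intro i; fin_cases i
        · exact hcon.1
        · exact hcon.2
      exact PiLp.ext this) with h | h
    · nlinarith [mul_self_nonneg (p 1), mul_self_pos.mpr h]
    · nlinarith [mul_self_nonneg (p 0), mul_self_pos.mpr h]
  set u : EuclideanSpace ℝ (Fin 2) := (WithLp.equiv 2 (Fin 2 → ℝ)).symm ![-(p 1), p 0] with hu
  have hu0 : u 0 = -(p 1) := rfl
  have hu1 : u 1 = p 0 := rfl
  rw [Metric.dense_iff]
  intro x r hr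
  set D : EuclideanSpace ℝ (Fin 2) → ℝ :=
    fun y => (y - a) 0 * (y - b) 1 - (y - a) 1 * (y - b) 0 with hD
  have hDy : ∀ t : ℝ, D (x + t • u) = D x - t * (p 0 * p 0 + p 1 * p 1) := by
    intro t
    have e1 : ∀ i : Fin 2, (x + t • u) i = x i + t * u i := by
      intro i
      simp [PiLp.add_apply, PiLp.smul_apply, smul_eq_mul]
    have ep0 : p 0 = a 0 - b 0 := by rw [hpdef]; simp [PiLp.sub_apply]
    have ep1 : p 1 = a 1 - b 1 := by rw [hpdef]; simp [PiLp.sub_apply]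
    simp only [hD, PiLp.sub_apply, e1]
    rw [hu0, hu1, ep0, ep1]
    ring
  set t1 : ℝ := r / (2 * (‖u‖ + 1)) with ht1
  have hu_nonneg : (0:ℝ) ≤ ‖u‖ := norm_nonneg u
  have ht1pos : 0 < t1 := by positivity
  have hdist : ∀ t : ℝ, 0 < t → t ≤ t1 → dist (x + t • u) x < r := by
    intro t ht ht1'
    rw [dist_eq_norm]
    have : x + t • u - x = t • u := by abel
    rw [this, norm_smul, Real.norm_eq_abs, abs_of_pos ht]
    have h2 : t * ‖u‖ ≤ t1 * ‖u‖ := by nlinarith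
    have hne : (‖u‖ + 1) ≠ 0 := by positivity
    have h3 : t1 * (‖u‖ + 1) = r / 2 := by
      rw [ht1]; field_simp
    nlinarith [ht1pos, hu_nonneg]
  rcases eq_or_ne (D x - t1 * (p 0 * p 0 + p 1 * p 1)) 0 with hz | hnz
  · refine ⟨x + (t1 / 2) • u, Metric.mem_ball'.mpr ?_, ?_⟩
    · rw [_root_.dist_comm]; exact hdist (t1 / 2) (by positivity) (by linarith)
    · simp only [Set.mem_setOf_eq]
      show D (x + (t1 / 2) • u) ≠ 0
      rw [hDy]
      intro hz2
      have h5 : (t1 / 2) * (p 0 * p 0 + p 1 * p 1) = 0 := by linear_combination hz2 - hz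
      have h6 := mul_pos (half_pos ht1pos) hK
      linarith
  · refine ⟨x + t1 • u, Metric.mem_ball'.mpr ?_, ?_⟩
    · rw [_root_.dist_comm]; exact hdist t1 ht1pos le_rfl
    · simp only [Set.mem_setOf_eq]
      show D (x + t1 • u) ≠ 0
      rw [hDy]
      exact hnz

lemma dense_good {d : ℕ} (hd : d = 1 ∨ d = 2) (N : Finset V) (hN : N.card ≤ d)
    (g : V → EuclideanSpace ℝ (Fin d)) (hginj : Function.Injective g) :
    Dense {x : EuclideanSpace ℝ (Fin d) |
      (∀ c : V → ℝ, ∑ u ∈ N, c u • (x - g u) = 0 → ∀ u ∈ N, c u = 0) ∧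
      ∀ u : V, x ≠ g u} := by
  have hd0 : 0 < d := by rcases hd with rfl | rfl <;> norm_num
  haveI := eu_nontrivial d hd0
  have hrange : Dense {x : EuclideanSpace ℝ (Fin d) | ∀ u : V, x ≠ g u} := by
    have hfin : (Set.range g).Finite := Set.finite_range g
    have hdc := hfin.countable.dense_compl (𝕜 := ℝ)
    have hset : (Set.range g)ᶜ = {x : EuclideanSpace ℝ (Fin d) | ∀ u : V, x ≠ g u} := by
      ext x
      constructor
      · intro h u hx
        exact h ⟨u, hx.symm⟩
      · rintro h ⟨u, hu⟩
        exact h u hu.symm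
    rw [hset] at hdc
    exact hdc
  have hdd : d ≤ 2 := by rcases hd with rfl | rfl <;> norm_num
  rcases (by omega : N.card = 0 ∨ N.card = 1 ∨ N.card = 2) with h0 | h0 | h0
  · have hNe : N = ∅ := Finset.card_eq_zero.mp h0
    refine Dense.mono ?_ hrange
    intro x hx
    refine ⟨?_, hx⟩
    intro c _ u hu
    rw [hNe] at hu
    exact absurd hu (Finset.notMem_empty u)
  · obtain ⟨u0, hu0⟩ := Finset.card_eq_one.mp h0
    refine Dense.mono ?_ hrange
    intro x hx
    refine ⟨?_, hx⟩
    intro c hc u hu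
    rw [hu0] at hc hu
    rw [Finset.sum_singleton] at hc
    rw [Finset.mem_singleton] at hu
    subst hu
    rcases smul_eq_zero.mp hc with h | h
    · exact h
    · exact absurd (sub_eq_zero.mp h) (hx u)
  · have hd2 : d = 2 := by omega
    subst hd2
    obtain ⟨u0, u1, hne, hNeq⟩ := Finset.card_eq_two.mp h0
    have hab : g u0 ≠ g u1 := fun h => hne (hginj h)
    have hDdense := dense_det_ne hab
    have hDopen : IsOpen {x : EuclideanSpace ℝ (Fin 2) |
        (x - g u0) 0 * (x - g u1) 1 - (x - g u0) 1 * (x - g u1) 0 ≠ 0} := by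
      have hcont : Continuous fun x : EuclideanSpace ℝ (Fin 2) =>
          (x - g u0) 0 * (x - g u1) 1 - (x - g u0) 1 * (x - g u1) 0 := by
        have hc : ∀ (z : EuclideanSpace ℝ (Fin 2)) (i : Fin 2),
            Continuous fun x : EuclideanSpace ℝ (Fin 2) => (x - z) i := by
          intro z i
          exact (EuclideanSpace.proj i).continuous.comp (continuous_id.sub continuous_const)
        exact ((hc (g u0) 0).mul (hc (g u1) 1)).sub ((hc (g u0) 1).mul (hc (g u1) 0))
      exact IsOpen.preimage hcont isOpen_ne
    have hDint := Dense.inter_of_isOpen_left hDdense hrange hDopen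
    refine Dense.mono ?_ hDint
    rintro x ⟨hxD, hxne⟩
    refine ⟨?_, hxne⟩
    intro c hc u hu
    rw [hNeq] at hc hu
    rw [Finset.sum_pair hne] at hc
    obtain ⟨h1, h2⟩ := indep2_coeffs hxD hc
    rw [Finset.mem_insert, Finset.mem_singleton] at hu
    rcases hu with rfl | rfl
    · exact h1
    · exact h2

lemma dense_of_no_edges {d : ℕ} (hd0 : 0 < d) (G : SimpleGraph V)
    (hE : ∀ v w : V, ¬ G.Adj v w) :
    Dense {f : V → EuclideanSpace ℝ (Fin d) |
      (∀ w : G.edgeSet → ℝ, IsStress G d f w → w = 0) ∧ Function.Injective f} := by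
  have hempty : ∀ e : Sym2 V, e ∉ G.edgeSet := by
    intro e
    induction e with
    | h p q => exact fun he => hE p q (G.mem_edgeSet.mp he)
  refine Dense.mono ?_ (dense_injective d hd0)
  intro f hf
  refine ⟨?_, hf⟩
  intro w _
  funext e
  exact absurd e.2 (hempty e.1)

set_option maxHeartbeats 1000000 in
lemma dense_stressFree_aux {d : ℕ} (hd : d = 1 ∨ d = 2) (m : ℕ) :
    ∀ (G : SimpleGraph V), G.edgeFinset.card ≤ m → ¬ ContainsKSubdivision G (d + 2) →
    Dense {f : V → EuclideanSpace ℝ (Fin d) |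
      (∀ w : G.edgeSet → ℝ, IsStress G d f w → w = 0) ∧ Function.Injective f} := by
  have hd0 : 0 < d := by rcases hd with rfl | rfl <;> norm_num
  induction m with
  | zero =>
    intro G hcard hfree
    refine dense_of_no_edges hd0 G ?_
    intro v w h
    have : s(v, w) ∈ G.edgeFinset := SimpleGraph.mem_edgeFinset.mpr h
    have : 0 < G.edgeFinset.card := Finset.card_pos.mpr ⟨_, this⟩
    omega
  | succ m IH =>
    intro G hcard hfree
    by_cases hE : ∃ p : V × V, G.Adj p.1 p.2
    swap
    · push_neg at hE
      exact dense_of_no_edges hd0 G (fun v w => hE (v, w))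
    obtain ⟨⟨p1, p2⟩, hp⟩ := hE
    have hlowex : ∃ u, 0 < G.degree u ∧ G.degree u ≤ d := by
      rcases hd with rfl | rfl
      · exact exists_low_of_not3 G hfree hp
      · exact exists_low_of_not4 G hfree hp
    obtain ⟨v, hv1, hv2⟩ := hlowex
    have hfree' : ¬ ContainsKSubdivision (delV G v) (d + 2) := fun hc =>
      hfree (contains_mono (delV_le G v) hc)
    have hcard' : (delV G v).edgeFinset.card ≤ m := by
      have := delV_edge_lt (G := G) (x := v) hv1
      omega
    have hdense' := IH (delV G v) hcard' hfree'
    rw [Metric.dense_iff]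
    intro f r hr
    obtain ⟨g', hg'ball, hg'stress, hg'inj⟩ := (Metric.dense_iff.mp hdense') f (r/2) (half_pos hr)
    have hdg := dense_good hd (G.neighborFinset v)
      (show (G.neighborFinset v).card ≤ d from hv2) g' hg'inj
    obtain ⟨x, hxball, hxind, hxne⟩ := (Metric.dense_iff.mp hdg) (f v) (r/2) (half_pos hr)
    refine ⟨Function.update g' v x, ?_, ?_, ?_⟩
    · -- in the ball
      rw [Metric.mem_ball, dist_pi_lt_iff hr]
      intro b
      rcases eq_or_ne b v with rfl | hb
      · rw [Function.update_self]
        have h1 : dist x (f b) < r / 2 := by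
          rw [Metric.mem_ball] at hxball
          exact hxball
        linarith
      · rw [Function.update_of_ne hb]
        have h1 : dist (g' b) (f b) ≤ dist g' f := dist_le_pi_dist g' f b
        have h2 : dist g' f < r / 2 := by
          rw [Metric.mem_ball] at hg'ball
          exact hg'ball
        linarith
    · -- stress free
      intro w hw
      have hzero : ∀ (u : V) (h : G.Adj v u), w ⟨s(v, u), G.mem_edgeSet.mpr h⟩ = 0 := by
        have hwv := hw v
        have hrw : (∑ u : V, if h : G.Adj v u then
              w ⟨s(v, u), G.mem_edgeSet.mpr h⟩ • (Function.update g' v x v - Function.update g' v x u) else 0)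
            = ∑ u ∈ G.neighborFinset v,
              (fun u => if h : G.Adj v u then w ⟨s(v, u), G.mem_edgeSet.mpr h⟩ else 0) u • (x - g' u) := by
          rw [SimpleGraph.neighborFinset_eq_filter, Finset.sum_filter]
          refine Finset.sum_congr rfl fun u _ => ?_
          by_cases h : G.Adj v u
          · simp only [dif_pos h, if_pos h, Function.update_self,
              Function.update_of_ne h.ne']
          · simp only [dif_neg h, if_neg h]
        rw [hrw] at hwv
        have hind := hxind (fun u => if h : G.Adj v u then
          w ⟨s(v, u), G.mem_edgeSet.mpr h⟩ else 0) hwv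
        intro u h
        have hu := hind u ((G.mem_neighborFinset v u).mpr h)
        simp only [dif_pos h] at hu
        exact hu
      have hstress' : IsStress (delV G v) d g'
          (fun e => w ⟨e.1, SimpleGraph.edgeSet_mono (delV_le G v) e.2⟩) := by
        intro u
        rcases eq_or_ne u v with rfl | huv
        · apply Finset.sum_eq_zero
          intro u' _
          rw [dif_neg]
          rintro ⟨_, h2, _⟩
          exact h2 rfl
        · have hwu := hw u
          refine Eq.trans (Finset.sum_congr rfl fun u' _ => ?_) hwu
          rcases eq_or_ne v u' with rfl | hvu'
          · rw [dif_neg (by rintro ⟨_, _, h3⟩; exact h3 rfl)]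
            by_cases h : G.Adj u v
            · rw [dif_pos h]
              have h0 : w ⟨s(u, v), G.mem_edgeSet.mpr h⟩ = 0 := by
                have hz := hzero u h.symm
                have hsym : (⟨s(u, v), G.mem_edgeSet.mpr h⟩ : G.edgeSet) =
                    ⟨s(v, u), G.mem_edgeSet.mpr h.symm⟩ := Subtype.ext (Sym2.eq_swap)
                rw [hsym]
                exact hz
              rw [h0, zero_smul]
            · rw [dif_neg h]
          · by_cases h : G.Adj u u'
            · rw [dif_pos (show (delV G v).Adj u u' from ⟨h, huv, Ne.symm hvu'⟩), dif_pos h,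
                Function.update_of_ne huv, Function.update_of_ne (Ne.symm hvu')]
            · rw [dif_neg (fun hc => h hc.1), dif_neg h]
      have hw'0 := hg'stress _ hstress'
      funext e
      rcases e with ⟨e, he⟩
      revert he
      induction e with
      | h p q =>
        intro he
        have hadj : G.Adj p q := G.mem_edgeSet.mp he
        rcases eq_or_ne v p with rfl | hpv
        · exact hzero q hadj
        rcases eq_or_ne v q with rfl | hqv
        · have hsym : (⟨s(p, v), he⟩ : G.edgeSet) =
              ⟨s(v, p), G.mem_edgeSet.mpr hadj.symm⟩ := Subtype.ext (Sym2.eq_swap)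
          rw [hsym]
          exact hzero p hadj.symm
        · have hmem : s(p, q) ∈ (delV G v).edgeSet := by
            rw [SimpleGraph.mem_edgeSet]
            exact ⟨hadj, Ne.symm hpv, Ne.symm hqv⟩
          exact congrFun hw'0 ⟨s(p, q), hmem⟩
    · -- injective
      intro a b hab2
      rcases eq_or_ne v a with rfl | hav <;> rcases eq_or_ne v b with rfl | hbv
      · rfl
      · rw [Function.update_self, Function.update_of_ne (Ne.symm hbv)] at hab2
        exact absurd hab2 (hxne b)
      · rw [Function.update_self, Function.update_of_ne (Ne.symm hav)] at hab2
        exact absurd hab2.symm (hxne a)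
      · rw [Function.update_of_ne (Ne.symm hav), Function.update_of_ne (Ne.symm hbv)] at hab2
        exact hg'inj hab2


end KSub

/-- For `2 ≤ r ≤ 4`, every finite simple graph containing no subdivision of `K_r`
is generically `(r-2)`-stress free. -/
theorem noKrSubdivision_genericallyStressFree {V : Type*} [Fintype V] (G : SimpleGraph V)
    (r : ℕ) (hr2 : 2 ≤ r) (hr4 : r ≤ 4)
    (hfree : ¬ ContainsKSubdivision G r) :
    GenericallyStressFree G (r - 2) := by
  have hr : r = 2 ∨ r = 3 ∨ r = 4 := by omega
  rcases hr with rfl | rfl | rfl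
  · refine ⟨KSub.isOpen_stressFree G 0, ?_⟩
    have hne := KSub.no_edges_of_not2 hfree
    have hset : StressFreeEmbeddings G (2 - 2) = Set.univ := by
      ext f
      simp only [StressFreeEmbeddings, Set.mem_setOf_eq, Set.mem_univ, iff_true]
      intro w _
      funext e
      have hempty : ∀ e' : Sym2 V, e' ∉ G.edgeSet := by
        intro e'
        induction e' with
        | h p q => exact fun he => hne p q (G.mem_edgeSet.mp he)
      exact absurd e.2 (hempty e.1)
    rw [hset]
    exact dense_univ
  · refine ⟨KSub.isOpen_stressFree G (3 - 2), ?_⟩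
    have hd := KSub.dense_stressFree_aux (V := V) (d := 1) (Or.inl rfl)
      G.edgeFinset.card G le_rfl hfree
    exact Dense.mono (fun f hf => hf.1) hd
  · refine ⟨KSub.isOpen_stressFree G (4 - 2), ?_⟩
    have hd := KSub.dense_stressFree_aux (V := V) (d := 2) (Or.inr rfl)
      G.edgeFinset.card G le_rfl hfree
    exact Dense.mono (fun f hf => hf.1) hd
end
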